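/- arXiv:1609.04195 — 6 statements merged into one kernel-verified Lean document; each statement's English description precedes it below -/
import Mathlib

section
/- Let A be an n×n complex matrix and let r ≥ 1 be an integer. Then the sum of the characteristic polynomials of all r-pavings of A equals the r-characteristic polynomial of A: Σ_{X ∈ P_r} χ[A_X](x) = χ_r[A](x), as an identity of polynomials in x. -/
open Polynomial Matrix

/-- The number of cycles of a permutation, counting fixed points as cycles. -/
def cycleCount {ι : Type*} [Fintype ι] [DecidableEq ι] (σ : Equiv.Perm ι) : ℕ :=
  σ.cycleType.card + (Fintype.card ι - σ.support.card)

/-- The `r`-determinant `det_r(M) = Σ_σ sgn(σ) r^{c(σ)} Π_i M_{i σ(i)}`. -/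
noncomputable def detr {ι : Type*} [Fintype ι] [DecidableEq ι] {R : Type*} [CommRing R]
    (r : ℕ) (M : Matrix ι ι R) : R :=
  ∑ σ : Equiv.Perm ι, ((Equiv.Perm.sign σ : ℤ) : R) * (r : R) ^ cycleCount σ * ∏ i, M i (σ i)

/-- The `r`-characteristic polynomial `χ_r[A](x) = det_r(xI - A)`. -/
noncomputable def chir {n : ℕ} (r : ℕ) (A : Matrix (Fin n) (Fin n) ℂ) : Polynomial ℂ :=
  detr r (Matrix.charmatrix A)

/-- The `r`-paving of `A` determined by the colouring `c : Fin n → Fin r`. -/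
def paving {n r : ℕ} (A : Matrix (Fin n) (Fin n) ℂ) (c : Fin n → Fin r) :
    Matrix (Fin n) (Fin n) ℂ :=
  Matrix.of fun i j => if c i = c j then A i j else 0

/-! The `σ`-term of `det(xI - A_X)` is the `σ`-term of `det(xI - A)` when the colouring `X` is
constant on the cycles of `σ`, and vanishes otherwise. Summing over `X`, the `σ`-term is therefore
counted once for each colouring of the cycles of `σ`, i.e. `r ^ c(σ)` times. -/

open Finset

namespace Equiv.Perm

variable {ι : Type*}

lemma sameCycle_setoid_le_ker_iff [Finite ι] {α : Type*} (σ : Perm ι) (c : ι → α) :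
    SameCycle.setoid σ ≤ Setoid.ker c ↔ ∀ i, c i = c (σ i) := by
  refine ⟨fun h i => h (sameCycle_apply_right.mpr (SameCycle.refl σ i)), fun hc x y hxy => ?_⟩
  obtain ⟨k, rfl⟩ := hxy.exists_nat_pow_eq
  have hσ : c ∘ σ = c := funext fun i => (hc i).symm
  change c x = c ((σ ^ k) x)
  rw [coe_pow, ← Function.comp_apply (f := c), Function.iterate_invariant hσ]

variable [Fintype ι] [DecidableEq ι]

def orbitLabel (σ : Perm ι) (x : ι) : Function.fixedPoints σ ⊕ σ.cycleFactorsFinset :=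
  if h : σ x = x then .inl ⟨x, h⟩
  else .inr ⟨σ.cycleOf x, cycleOf_mem_cycleFactorsFinset_iff.mpr (mem_support.mpr h)⟩

lemma sameCycle_iff_orbitLabel_eq (σ : Perm ι) (x y : ι) :
    σ.SameCycle x y ↔ orbitLabel σ x = orbitLabel σ y := by
  unfold orbitLabel
  split_ifs with hx hy hy
  · rw [Sum.inl.injEq, Subtype.ext_iff]
    exact ⟨fun h => h.eq_of_left hx, fun h : x = y => h ▸ .refl σ x⟩
  · simpa using fun h : σ.SameCycle x y => hy (h.apply_eq_self_iff.mp hx)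
  · simpa using fun h : σ.SameCycle x y => hx (h.apply_eq_self_iff.mpr hy)
  · rw [Sum.inr.injEq, Subtype.mk.injEq]
    exact sameCycle_iff_cycleOf_eq_of_mem_support (mem_support.mpr hx) (mem_support.mpr hy)

lemma orbitLabel_surjective (σ : Perm ι) : Function.Surjective (orbitLabel σ) := by
  rintro (⟨x, hx⟩ | ⟨γ, hγ⟩)
  · exact ⟨x, dif_pos hx⟩
  · obtain ⟨a, ha⟩ := (mem_cycleFactorsFinset_iff.mp hγ).1.nonempty_support
    have haσ : σ a ≠ a := mem_support.mp (mem_cycleFactorsFinset_support_le hγ ha)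
    refine ⟨a, ?_⟩
    simp only [orbitLabel, dif_neg haσ, cycle_is_cycleOf ha hγ]

lemma card_quotient_sameCycle (σ : Perm ι) :
    Nat.card (Quotient (SameCycle.setoid σ)) = cycleCount σ := by
  have e : Quotient (SameCycle.setoid σ) ≃ Function.fixedPoints σ ⊕ σ.cycleFactorsFinset :=
    (Quotient.congrRight (sameCycle_iff_orbitLabel_eq σ)).trans
      (Setoid.quotientKerEquivOfSurjective _ (orbitLabel_surjective σ))
  rw [Nat.card_congr e, Nat.card_sum, Nat.card_eq_fintype_card, Nat.card_eq_fintype_card,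
    card_fixedPoints, sum_cycleType, cycleCount, Fintype.card_coe, cycleType_def,
    Multiset.card_map, add_comm]
  rfl

lemma card_invariant_colorings {α : Type*} [Fintype α] [DecidableEq α] (σ : Perm ι) :
    #{c : ι → α | ∀ i, c i = c (σ i)} = Fintype.card α ^ cycleCount σ := by
  rw [← Fintype.card_subtype, ← Nat.card_eq_fintype_card]
  simp_rw [← sameCycle_setoid_le_ker_iff]
  rw [Nat.card_congr (Setoid.liftEquiv _), Nat.card_fun, card_quotient_sameCycle,
    Nat.card_eq_fintype_card]

end Equiv.Perm

namespace Matrix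

variable {ι R α : Type*} [DecidableEq α]

def blockRestrict [Zero R] (M : Matrix ι ι R) (c : ι → α) : Matrix ι ι R :=
  of fun i j => if c i = c j then M i j else 0

variable [Fintype ι] [DecidableEq ι] [CommRing R]

lemma charmatrix_blockRestrict (M : Matrix ι ι R) (c : ι → α) :
    charmatrix (blockRestrict M c) = blockRestrict (charmatrix M) c := by
  ext i j
  rcases eq_or_ne i j with rfl | hij
  · simp [blockRestrict, charmatrix_apply_eq]
  · by_cases hc : c i = c j <;> simp [blockRestrict, charmatrix_apply_ne _ _ _ hij, hc]

lemma det_eq_sum_sign_mul_prod (M : Matrix ι ι R) :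
    M.det = ∑ σ : Equiv.Perm ι, (Equiv.Perm.sign σ : ℤ) * ∏ i, M i (σ i) := by
  rw [← det_transpose, det_apply']
  rfl

lemma sum_prod_blockRestrict_apply [Fintype α] (M : Matrix ι ι R) (σ : Equiv.Perm ι) :
    ∑ c : ι → α, ∏ i, blockRestrict M c i (σ i) =
      (Fintype.card α : R) ^ cycleCount σ * ∏ i, M i (σ i) := by
  simp only [blockRestrict, of_apply, Fintype.prod_ite_zero]
  rw [← Finset.sum_filter, sum_const, Equiv.Perm.card_invariant_colorings, nsmul_eq_mul,
    Nat.cast_pow]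

theorem sum_det_blockRestrict [Fintype α] (M : Matrix ι ι R) :
    ∑ c : ι → α, (blockRestrict M c).det = detr (Fintype.card α) M := by
  simp_rw [det_eq_sum_sign_mul_prod]
  rw [Finset.sum_comm, detr]
  refine sum_congr rfl fun σ _ => ?_
  rw [← mul_sum, sum_prod_blockRestrict_apply, mul_assoc]

end Matrix

theorem sum_paving_charpoly_eq_chir_general {n : ℕ} (r : ℕ)
    (A : Matrix (Fin n) (Fin n) ℂ) :
    ∑ c : Fin n → Fin r, (paving A c).charpoly = chir r A := by
  change ∑ c, (charmatrix (blockRestrict A c)).det = detr r (charmatrix A)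
  simpa only [charmatrix_blockRestrict, Fintype.card_fin] using
    sum_det_blockRestrict (α := Fin r) (charmatrix A)

/-- The sum of the characteristic polynomials of all `r`-pavings of `A` equals the
`r`-characteristic polynomial of `A`. -/
theorem sum_paving_charpoly_eq_chir {n : ℕ} (r : ℕ) (hr : 1 ≤ r)
    (A : Matrix (Fin n) (Fin n) ℂ) :
    ∑ c : Fin n → Fin r, (paving A c).charpoly = chir r A :=
  sum_paving_charpoly_eq_chir_general r A
end

section
/- Let A be an n×n complex matrix, let r ≥ 1 be an integer, and let Z = diag(z₁,…,z_n) be the diagonal matrix of indeterminates. Then, as an identity of polynomials in x, χ_r[A](x) = (1/(r−1)!)^n · (∂^{r−1}/∂z₁^{r−1} ⋯ ∂^{r−1}/∂z_n^{r−1}) (det(Z − A))^r, evaluated at z₁ = ⋯ = z_n = x. -/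
open Polynomial Matrix

/-- The formal partial derivative `∂/∂zᵢ`, as a linear endomorphism of `ℂ[z₁,…,z_n]`. -/
noncomputable def pd {n : ℕ} (i : Fin n) :
    MvPolynomial (Fin n) ℂ →ₗ[ℂ] MvPolynomial (Fin n) ℂ :=
  (MvPolynomial.pderiv i).toLinearMap

/-- The matrix `Z - A`, where `Z = diag(z₁,…,z_n)` is the diagonal matrix of indeterminates. -/
noncomputable def ZsubA {n : ℕ} (A : Matrix (Fin n) (Fin n) ℂ) :
    Matrix (Fin n) (Fin n) (MvPolynomial (Fin n) ℂ) :=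
  Matrix.of fun i j => (if i = j then MvPolynomial.X i else 0) - MvPolynomial.C (A i j)

set_option linter.unusedSectionVars false

open Equiv

section parta
noncomputable def phi {n : ℕ} (i : Fin n) : Polynomial ℂ →ₐ[ℂ] MvPolynomial (Fin n) ℂ :=
  Polynomial.aeval (MvPolynomial.X i)

lemma pd_apply {n : ℕ} (i : Fin n) (p) : pd i p = MvPolynomial.pderiv i p := rfl

lemma pd_phi {n : ℕ} (i j : Fin n) (h : Polynomial ℂ) :
    pd j (phi i h) = if j = i then phi i (derivative h) else 0 := by
  induction h using Polynomial.induction_on with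
  | C a => simp [phi, pd]
  | add p q hp hq => simp only [map_add, hp, hq]; split <;> simp
  | monomial m a ih =>
      simp only [_root_.map_mul, phi, Polynomial.aeval_C, Polynomial.aeval_X, map_pow,
        pd_apply] at *
      rw [pow_succ]
      split <;> rename_i hji
      · subst hji
        simp only [derivative_C, zero_mul, zero_add, derivative_pow, derivative_X, mul_one,
          _root_.map_mul, _root_.map_add, map_pow, map_nsmul, Polynomial.aeval_C,
          Polynomial.aeval_X, map_natCast, MvPolynomial.pderiv_mul, MvPolynomial.pderiv_pow,
          MvPolynomial.pderiv_X_self, MvPolynomial.algebraMap_eq, map_zero,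
          MvPolynomial.pderiv_C, zero_mul, zero_add, Polynomial.derivative_C_mul_X_pow]
        simp only [_root_.map_mul, Polynomial.aeval_C, map_pow, Polynomial.aeval_X, map_natCast,
          Nat.cast_add, Nat.cast_one, Nat.add_sub_cancel]
        cases m with
        | zero => simp
        | succ m =>
            rw [Nat.add_sub_cancel, pow_succ]
            push_cast
            ring
      · simp only [MvPolynomial.pderiv_mul, MvPolynomial.pderiv_pow, MvPolynomial.pderiv_X,
          Pi.single_apply, MvPolynomial.algebraMap_eq, map_zero]
        rw [if_neg (fun hh => hji hh.symm)]
        simp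

lemma aeval_phi {n : ℕ} (i : Fin n) (h : Polynomial ℂ) :
    MvPolynomial.aeval (fun _ : Fin n => (Polynomial.X : Polynomial ℂ)) (phi i h) = h := by
  rw [phi, ← Polynomial.aeval_algHom_apply]
  simp

end parta

section partb
lemma pd_prod_zero {n : ℕ} (j : Fin n) {ι : Type*} (s : Finset ι) (g : ι → MvPolynomial (Fin n) ℂ)
    (hg : ∀ i ∈ s, pd j (g i) = 0) : pd j (∏ i ∈ s, g i) = 0 := by
  classical
  induction s using Finset.induction_on with
  | empty => simp [pd]
  | @insert a s hx ih =>
      rw [Finset.prod_insert hx]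
      have : pd j (g a * ∏ i ∈ s, g i) =
          MvPolynomial.pderiv j (g a * ∏ i ∈ s, g i) := rfl
      rw [this, MvPolynomial.pderiv_mul]
      have h1 : MvPolynomial.pderiv j (g a) = (0 : MvPolynomial (Fin n) ℂ) :=
        hg a (Finset.mem_insert_self a s)
      have h2 := ih (fun i hi => hg i (Finset.mem_insert_of_mem hi))
      rw [h1]
      rw [show MvPolynomial.pderiv j (∏ i ∈ s, g i) = pd j (∏ i ∈ s, g i) from rfl, h2]
      simp

lemma pd_prod_phi {n : ℕ} (j : Fin n) (h : Fin n → Polynomial ℂ) :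
    pd j (∏ i, phi i (h i)) = ∏ i, phi i (if i = j then derivative (h i) else h i) := by
  classical
  rw [← Finset.mul_prod_erase Finset.univ _ (Finset.mem_univ j),
    ← Finset.mul_prod_erase Finset.univ (fun i => phi i (if i = j then derivative (h i) else h i))
      (Finset.mem_univ j)]
  have : pd j (phi j (h j) * ∏ i ∈ Finset.univ.erase j, phi i (h i)) =
      MvPolynomial.pderiv j (phi j (h j) * ∏ i ∈ Finset.univ.erase j, phi i (h i)) := rfl
  rw [this, MvPolynomial.pderiv_mul]
  have h0 : pd j (∏ i ∈ Finset.univ.erase j, phi i (h i)) = 0 := by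
    apply pd_prod_zero
    intro i hi
    rw [pd_phi, if_neg (Ne.symm (Finset.ne_of_mem_erase hi))]
  rw [show MvPolynomial.pderiv j (∏ i ∈ Finset.univ.erase j, phi i (h i))
      = pd j (∏ i ∈ Finset.univ.erase j, phi i (h i)) from rfl, h0,
    show MvPolynomial.pderiv j (phi j (h j)) = pd j (phi j (h j)) from rfl, pd_phi,
    if_pos rfl, if_pos rfl]
  rw [mul_zero, add_zero]
  congr 1
  apply Finset.prod_congr rfl
  intro i hi
  rw [if_neg (Finset.ne_of_mem_erase hi)]

lemma pd_pow_prod_phi {n : ℕ} (j : Fin n) (m : ℕ) (h : Fin n → Polynomial ℂ) :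
    (pd j ^ m) (∏ i, phi i (h i)) = ∏ i, phi i (if i = j then derivative^[m] (h i) else h i) := by
  induction m with
  | zero => simp
  | succ m ih =>
      rw [pow_succ', Module.End.mul_apply, ih, pd_prod_phi]
      apply Finset.prod_congr rfl
      intro i _
      congr 1
      by_cases hij : i = j <;> simp [hij, Function.iterate_succ_apply']

lemma pd_list_prod_phi {n : ℕ} (m : ℕ) (l : List (Fin n)) (hl : l.Nodup)
    (h : Fin n → Polynomial ℂ) :
    ((l.map fun i => pd i ^ m).prod) (∏ i, phi i (h i)) =
      ∏ i, phi i (if i ∈ l then derivative^[m] (h i) else h i) := by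
  induction l with
  | nil => simp
  | cons a t ih =>
      rw [List.map_cons, List.prod_cons, Module.End.mul_apply,
        ih (List.nodup_cons.mp hl).2, pd_pow_prod_phi]
      apply Finset.prod_congr rfl
      intro i _
      congr 1
      by_cases hia : i = a
      · subst hia
        rw [if_pos rfl, if_neg (List.nodup_cons.mp hl).1, if_pos (by simp)]
      · rw [if_neg hia]
        by_cases hit : i ∈ t <;> simp [hit, hia, List.mem_cons]

lemma op_prod_phi {n : ℕ} (m : ℕ) (h : Fin n → Polynomial ℂ) :
    ((List.ofFn (fun i : Fin n => (pd i) ^ m)).prod) (∏ i, phi i (h i)) =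
      ∏ i, phi i (derivative^[m] (h i)) := by
  rw [List.ofFn_eq_map, pd_list_prod_phi m _ (List.nodup_finRange n)]
  simp

end partb

section partc
variable {α : Type*} [DecidableEq α] [Fintype α]

lemma list_prod_apply_fixed (l : List (Perm α)) (i : α) (h : ∀ τ ∈ l, τ i = i) :
    l.prod i = i := by
  induction l with
  | nil => simp
  | cons a t ih =>
      rw [List.prod_cons, Perm.mul_apply, ih (fun τ ht => h τ (List.mem_cons_of_mem a ht)),
        h a List.mem_cons_self]

lemma ofFn_prod_apply_unique {r : ℕ} (f : Fin r → Perm α) (k₀ : Fin r) (i : α)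
    (h1 : ∀ k, k ≠ k₀ → f k i = i) (h2 : ∀ k, k ≠ k₀ → f k (f k₀ i) = f k₀ i) :
    (List.ofFn f).prod i = f k₀ i := by
  induction r with
  | zero => exact absurd k₀.2 (by simp)
  | succ r ih =>
      rw [List.ofFn_succ, List.prod_cons, Perm.mul_apply]
      rcases Fin.eq_zero_or_eq_succ k₀ with h0 | ⟨j, hj⟩
      · subst h0
        rw [list_prod_apply_fixed _ i (by
          intro τ hτ
          rw [List.mem_ofFn] at hτ
          obtain ⟨k, rfl⟩ := hτ
          exact h1 _ (Fin.succ_ne_zero k))]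
      · subst hj
        rw [ih (fun k => f k.succ) j
          (fun k hk => h1 k.succ (by simpa using hk))
          (fun k hk => h2 k.succ (by simpa using hk))]
        exact h2 0 (Ne.symm (Fin.succ_ne_zero j))

/-- each point is moved by at most one of the permutations in the tuple -/
def Dis {r : ℕ} (f : Fin r → Perm α) : Prop :=
  ∀ (i : α) (k k' : Fin r), f k i ≠ i → f k' i ≠ i → k = k'

noncomputable instance {r : ℕ} : DecidablePred (Dis (α := α) (r := r)) := by
  classical exact fun f => inferInstanceAs (Decidable _)

lemma dis_apply_move {r : ℕ} {f : Fin r → Perm α} (hf : Dis f) {k₀ : Fin r} {i : α}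
    (hk : f k₀ i ≠ i) : (List.ofFn f).prod i = f k₀ i := by
  apply ofFn_prod_apply_unique f k₀ i
  · intro k hkk
    by_contra hne
    exact hkk (hf i k k₀ hne hk)
  · intro k hkk
    by_contra hne
    have hm : f k₀ (f k₀ i) ≠ f k₀ i := fun he => hk ((f k₀).injective he)
    exact hkk (hf (f k₀ i) k k₀ hne hm)

lemma dis_apply_fixed {r : ℕ} {f : Fin r → Perm α} {i : α} (hf : ∀ k, f k i = i) :
    (List.ofFn f).prod i = i := by
  apply list_prod_apply_fixed
  intro τ hτ
  rw [List.mem_ofFn] at hτ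
  obtain ⟨k, rfl⟩ := hτ
  exact hf k

lemma dis_fixed_iff {r : ℕ} {f : Fin r → Perm α} (hf : Dis f) (i : α) :
    (List.ofFn f).prod i = i ↔ ∀ k, f k i = i := by
  constructor
  · intro h k
    by_contra hk
    rw [dis_apply_move hf hk] at h
    exact hk h
  · exact fun h => dis_apply_fixed h

lemma sign_ofFn_prod {r : ℕ} (f : Fin r → Perm α) :
    Perm.sign (List.ofFn f).prod = ∏ k, Perm.sign (f k) := by
  rw [map_list_prod, List.map_ofFn, List.prod_ofFn]
  rfl

end partc

section partd
variable {α : Type*} [DecidableEq α] [Fintype α] {σ : Perm α}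
lemma mover_apply {r : ℕ} {f : Fin r → Perm α} {σ : Perm α} (hd : Dis f)
    (hσ : (List.ofFn f).prod = σ) {k : Fin r} {i : α} (hi : f k i ≠ i) :
    f k i = σ i := by rw [← hσ]; exact (dis_apply_move hd hi).symm

lemma mover_step {r : ℕ} {f : Fin r → Perm α} {σ : Perm α} (hd : Dis f)
    (hσ : (List.ofFn f).prod = σ) {k : Fin r} {i : α} (hi : f k i ≠ i) :
    f k (σ i) ≠ σ i := by
  rw [← mover_apply hd hσ hi]
  intro h
  exact hi ((f k).injective h)

lemma mover_pow {r : ℕ} {f : Fin r → Perm α} {σ : Perm α} (hd : Dis f)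
    (hσ : (List.ofFn f).prod = σ) {k : Fin r} (m : ℕ) :
    ∀ i : α, f k i ≠ i → f k ((σ ^ m) i) ≠ (σ ^ m) i := by
  induction m with
  | zero => intro i hi; simpa using hi
  | succ m ih =>
      intro i hi
      rw [pow_succ, Perm.mul_apply]
      exact ih (σ i) (mover_step hd hσ hi)

lemma mover_sameCycle {r : ℕ} {f : Fin r → Perm α} {σ : Perm α} (hd : Dis f)
    (hσ : (List.ofFn f).prod = σ) {k : Fin r} {i j : α} (hij : σ.SameCycle i j)
    (hi : f k i ≠ i) : f k j ≠ j := by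
  obtain ⟨m, -, rfl⟩ := hij.exists_pow_eq'
  exact mover_pow hd hσ m i hi

/-- existence of a mover for a support point -/
lemma exists_mover {r : ℕ} {f : Fin r → Perm α} {σ : Perm α}
    (hσ : (List.ofFn f).prod = σ) {i : α} (hi : σ i ≠ i) : ∃ k, f k i ≠ i := by
  by_contra h
  push_neg at h
  exact hi (by rw [← hσ]; exact dis_apply_fixed h)

lemma existsUnique_mover {r : ℕ} {f : Fin r → Perm α} {σ : Perm α} (hd : Dis f)
    (hσ : (List.ofFn f).prod = σ) {i : α} (hi : σ i ≠ i) : ∃! k, f k i ≠ i := by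
  obtain ⟨k, hk⟩ := exists_mover hσ hi
  exact ⟨k, hk, fun k' hk' => hd i k' k hk' hk⟩

variable {σ : Perm α}

/-- base point of a cycle factor -/
noncomputable def basePt (d : σ.cycleFactorsFinset) : α :=
  (Finset.nonempty_iff_ne_empty.mpr (fun h =>
    (Equiv.Perm.mem_cycleFactorsFinset_iff.mp d.2).1.ne_one
      (Equiv.Perm.support_eq_empty_iff.mp h))).choose

lemma basePt_mem (d : σ.cycleFactorsFinset) : basePt d ∈ (d : Perm α).support :=
  (Finset.nonempty_iff_ne_empty.mpr (fun h =>
    (Equiv.Perm.mem_cycleFactorsFinset_iff.mp d.2).1.ne_one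
      (Equiv.Perm.support_eq_empty_iff.mp h))).choose_spec

lemma basePt_mem_support (d : σ.cycleFactorsFinset) : basePt d ∈ σ.support := by
  have h := (Equiv.Perm.mem_cycleFactorsFinset_iff.mp d.2).2 _ (basePt_mem d)
  rw [Equiv.Perm.mem_support, ← h]
  exact Equiv.Perm.mem_support.mp (basePt_mem d)

lemma basePt_cycleOf (d : σ.cycleFactorsFinset) : σ.cycleOf (basePt d) = (d : Perm α) :=
  (Equiv.Perm.cycle_is_cycleOf (basePt_mem d) d.2).symm

/-- the coloring of a point: which cycle-factor class, as an option -/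
noncomputable def colr (c : σ.cycleFactorsFinset → Fin r) (i : α) : Option (Fin r) :=
  if hi : i ∈ σ.support then
    some (c ⟨σ.cycleOf i, Equiv.Perm.cycleOf_mem_cycleFactorsFinset_iff.mpr hi⟩) else none

lemma col_apply (c : σ.cycleFactorsFinset → Fin r) (i : α) : colr c (σ i) = colr c i := by
  unfold colr
  by_cases hi : i ∈ σ.support
  · rw [dif_pos hi, dif_pos (Equiv.Perm.apply_mem_support.mpr hi)]
    congr 2
    exact Subtype.ext (Equiv.Perm.cycleOf_self_apply σ i)
  · rw [dif_neg hi, dif_neg (fun h => hi (Equiv.Perm.apply_mem_support.mp h))]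

noncomputable def Fc {r : ℕ} (c : σ.cycleFactorsFinset → Fin r) (k : Fin r) : Perm α :=
  Equiv.Perm.ofSubtype (σ.subtypePerm (p := fun i => colr c i = some k)
    (fun i => by show colr c (σ i) = some k ↔ colr c i = some k; rw [col_apply c i]))

lemma Fc_apply_of_col {r : ℕ} (c : σ.cycleFactorsFinset → Fin r) {k : Fin r} {i : α}
    (h : colr c i = some k) : Fc c k i = σ i := by
  rw [Fc, Equiv.Perm.ofSubtype_apply_of_mem (p := fun i => colr c i = some k) _ h]; rfl

lemma Fc_apply_of_ncol {r : ℕ} (c : σ.cycleFactorsFinset → Fin r) {k : Fin r} {i : α}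
    (h : ¬ colr c i = some k) : Fc c k i = i :=
  Equiv.Perm.ofSubtype_apply_of_not_mem (p := fun i => colr c i = some k) _ h

lemma Fc_move_iff {r : ℕ} (c : σ.cycleFactorsFinset → Fin r) {k : Fin r} {i : α} :
    Fc c k i ≠ i ↔ (colr c i = some k ∧ σ i ≠ i) := by
  constructor
  · intro h
    by_cases hc : colr c i = some k
    · exact ⟨hc, by rwa [Fc_apply_of_col c hc] at h⟩
    · exact absurd (Fc_apply_of_ncol c hc) h
  · rintro ⟨hc, hi⟩
    rwa [Fc_apply_of_col c hc]

lemma Fc_dis {r : ℕ} (c : σ.cycleFactorsFinset → Fin r) : Dis (Fc c) := by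
  intro i k k' hk hk'
  have h1 := (Fc_move_iff c).mp hk
  have h2 := (Fc_move_iff c).mp hk'
  have := h1.1.symm.trans h2.1
  exact (Option.some_injective _ this.symm).symm

lemma Fc_prod {r : ℕ} (c : σ.cycleFactorsFinset → Fin r) : (List.ofFn (Fc c)).prod = σ := by
  ext i
  by_cases hi : σ i = i
  · rw [hi]
    apply dis_apply_fixed
    intro k
    by_contra hk
    exact ((Fc_move_iff c).mp hk).2 hi
  · have hmem : i ∈ σ.support := Equiv.Perm.mem_support.mpr hi
    set k₀ := c ⟨σ.cycleOf i, Equiv.Perm.cycleOf_mem_cycleFactorsFinset_iff.mpr hmem⟩ with hk₀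
    have hcol : colr c i = some k₀ := by rw [colr, dif_pos hmem]
    have hmove : Fc c k₀ i ≠ i := (Fc_move_iff c).mpr ⟨hcol, hi⟩
    rw [dis_apply_move (Fc_dis c) hmove, Fc_apply_of_col c hcol]

noncomputable def Gc {r : ℕ} (f : {f : Fin r → Perm α // Dis f ∧ (List.ofFn f).prod = σ})
    (d : σ.cycleFactorsFinset) : Fin r :=
  Fintype.choose (fun k => f.1 k (basePt d) ≠ basePt d)
    (existsUnique_mover f.2.1 f.2.2 (Equiv.Perm.mem_support.mp (basePt_mem_support d)))

lemma Gc_spec {r : ℕ} (f : {f : Fin r → Perm α // Dis f ∧ (List.ofFn f).prod = σ})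
    (d : σ.cycleFactorsFinset) : f.1 (Gc f d) (basePt d) ≠ basePt d :=
  Fintype.choose_spec (fun k => f.1 k (basePt d) ≠ basePt d) _

lemma col_eq_some {r : ℕ} (c : σ.cycleFactorsFinset → Fin r) {i : α} (hi : i ∈ σ.support) :
    colr c i = some (c ⟨σ.cycleOf i, Equiv.Perm.cycleOf_mem_cycleFactorsFinset_iff.mpr hi⟩) := by
  rw [colr, dif_pos hi]

noncomputable def colEquiv (σ : Perm α) (r : ℕ) :
    (σ.cycleFactorsFinset → Fin r) ≃ {f : Fin r → Perm α // Dis f ∧ (List.ofFn f).prod = σ} where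
  toFun c := ⟨Fc c, Fc_dis c, Fc_prod c⟩
  invFun f := Gc f
  left_inv c := by
    funext d
    have hbs := basePt_mem_support d
    have hcol : colr c (basePt d) = some (c d) := by
      rw [col_eq_some c hbs]
      congr 1
      exact congrArg c (Subtype.ext (basePt_cycleOf d))
    have hmove : Fc c (c d) (basePt d) ≠ basePt d :=
      (Fc_move_iff c).mpr ⟨hcol, Equiv.Perm.mem_support.mp hbs⟩
    exact Fc_dis c (basePt d) _ _ (Gc_spec ⟨Fc c, Fc_dis c, Fc_prod c⟩ d) hmove
  right_inv f := by
    obtain ⟨f, hd, hp⟩ := f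
    apply Subtype.ext
    funext k
    apply Equiv.ext
    intro i
    show Fc (Gc ⟨f, hd, hp⟩) k i = f k i
    by_cases hσi : σ i = i
    · have hR : f k i = i := by
        by_contra hk
        rw [mover_apply hd hp hk] at hk
        exact hk hσi
      rw [hR]
      by_contra h
      exact ((Fc_move_iff _).mp h).2 hσi
    · have hmem : i ∈ σ.support := Equiv.Perm.mem_support.mpr hσi
      set d : σ.cycleFactorsFinset :=
        ⟨σ.cycleOf i, Equiv.Perm.cycleOf_mem_cycleFactorsFinset_iff.mpr hmem⟩ with hd'
      have hsc : σ.SameCycle i (basePt d) := by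
        have := basePt_mem d
        rw [hd'] at this
        exact (Equiv.Perm.mem_support_cycleOf_iff.mp this).1
      obtain ⟨k₂, hk₂, huniq⟩ := existsUnique_mover hd hp hσi
      have hGc : Gc ⟨f, hd, hp⟩ d = k₂ := by
        have h1 : f k₂ (basePt d) ≠ basePt d := mover_sameCycle hd hp hsc hk₂
        exact hd (basePt d) _ _ (Gc_spec ⟨f, hd, hp⟩ d) h1
      have hcol : colr (Gc ⟨f, hd, hp⟩) i = some k₂ := by
        rw [col_eq_some _ hmem, ← hd', hGc]
      by_cases hk : k = k₂
      · subst hk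
        rw [Fc_apply_of_col _ hcol]
        exact (mover_apply hd hp hk₂).symm ▸ (mover_apply hd hp hk₂)
      · have : ¬ colr (Gc ⟨f, hd, hp⟩) i = some k := by
          rw [hcol]
          exact fun hh => hk (Option.some_injective _ hh).symm
        rw [Fc_apply_of_ncol _ this]
        by_contra hki
        exact hk (huniq k (Ne.symm hki))

lemma card_dis_prod (σ : Perm α) (r : ℕ) :
    (Finset.univ.filter
      (fun f : Fin r → Perm α => Dis f ∧ (List.ofFn f).prod = σ)).card =
      r ^ σ.cycleType.card := by
  classical
  have h1 := Fintype.card_congr (colEquiv σ r)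
  rw [Fintype.card_fun, Fintype.card_coe, Fintype.card_subtype] at h1
  rw [← h1, Equiv.Perm.cycleType_def, Multiset.card_map, Fintype.card_fin]
  rfl

end partd

section parte
-- ====== analytic side ======
variable {n : ℕ}

lemma ZsubA_apply (A : Matrix (Fin n) (Fin n) ℂ) (i j : Fin n) :
    ZsubA A i j = phi i (charmatrix A i j) := by
  by_cases hij : i = j
  · subst hij
    rw [charmatrix_apply_eq]
    simp [ZsubA, phi, MvPolynomial.algebraMap_eq]
  · rw [charmatrix_apply_ne _ _ _ hij]
    simp [ZsubA, hij, phi, MvPolynomial.algebraMap_eq]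

lemma det_ZsubA (A : Matrix (Fin n) (Fin n) ℂ) :
    (ZsubA A).det = ∑ σ : Perm (Fin n),
      ((Perm.sign σ : ℤ) : MvPolynomial (Fin n) ℂ) * ∏ i, phi i (charmatrix A i (σ i)) := by
  rw [← Matrix.det_transpose, Matrix.det_apply']
  apply Finset.sum_congr rfl
  intro σ _
  congr 1
  apply Finset.prod_congr rfl
  intro i _
  rw [Matrix.transpose_apply, ZsubA_apply]

lemma det_pow_expand (r : ℕ) (A : Matrix (Fin n) (Fin n) ℂ) :
    (ZsubA A).det ^ r = ∑ f : Fin r → Perm (Fin n),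
      (((∏ k, (Perm.sign (f k) : ℤ)) : ℤ) : MvPolynomial (Fin n) ℂ) *
        ∏ i, phi i (∏ k, charmatrix A i (f k i)) := by
  rw [det_ZsubA, Fintype.sum_pow]
  apply Finset.sum_congr rfl
  intro f _
  rw [Finset.prod_mul_distrib]
  congr 1
  · push_cast
    rfl
  · rw [Finset.prod_comm]
    apply Finset.prod_congr rfl
    intro i _
    rw [← map_prod]

lemma rhs_sum (r : ℕ) (A : Matrix (Fin n) (Fin n) ℂ) :
    MvPolynomial.aeval (fun _ : Fin n => (Polynomial.X : Polynomial ℂ))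
      (((List.ofFn (fun i : Fin n => (pd i) ^ (r-1))).prod) ((ZsubA A).det ^ r)) =
    ∑ f : Fin r → Perm (Fin n),
      (((∏ k, (Perm.sign (f k) : ℤ)) : ℤ) : Polynomial ℂ) *
        ∏ i, derivative^[r-1] (∏ k, charmatrix A i (f k i)) := by
  rw [det_pow_expand, map_sum, map_sum]
  apply Finset.sum_congr rfl
  intro f _
  rw [← zsmul_eq_mul, map_zsmul, map_zsmul, op_prod_phi, map_prod]
  rw [zsmul_eq_mul]
  congr 1
  apply Finset.prod_congr rfl
  intro i _
  rw [aeval_phi]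

lemma df_pred (s : ℕ) : (s+1).descFactorial s = (s+1).factorial := by
  induction s with
  | zero => rfl
  | succ s ih =>
      rw [Nat.succ_descFactorial_succ, ih, Nat.factorial_succ (s+1), Nat.factorial_succ s]

lemma prod_cm_eq (A : Matrix (Fin n) (Fin n) ℂ) (i : Fin n) {r : ℕ} (v : Fin r → Fin n) :
    ∏ k, charmatrix A i (v k) =
      C (∏ k ∈ Finset.univ.filter (fun k => ¬ v k = i), (- A i (v k))) *
        (X - C (A i i)) ^ (Finset.univ.filter (fun k => v k = i)).card := by
  rw [← Finset.prod_filter_mul_prod_filter_not Finset.univ (fun k => v k = i), mul_comm]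
  congr 1
  · rw [map_prod]
    apply Finset.prod_congr rfl
    intro k hk
    rw [charmatrix_apply_ne _ _ _ (fun h => (Finset.mem_filter.mp hk).2 h.symm), map_neg]
  · rw [← Finset.prod_const]
    apply Finset.prod_congr rfl
    intro k hk
    rw [(Finset.mem_filter.mp hk).2, charmatrix_apply_eq]

lemma term_zero {r : ℕ} (A : Matrix (Fin n) (Fin n) ℂ) {f : Fin r → Perm (Fin n)}
    (hnd : ¬ Dis f) :
    ∏ i, derivative^[r-1] (∏ k, charmatrix A i (f k i)) = 0 := by
  unfold Dis at hnd
  push_neg at hnd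
  obtain ⟨i, k, k', hk, hk', hkk⟩ := hnd
  apply Finset.prod_eq_zero (Finset.mem_univ i)
  rw [prod_cm_eq, Polynomial.iterate_derivative_C_mul, Polynomial.iterate_derivative_X_sub_pow]
  have hsub : Finset.univ.filter (fun m => f m i = i) ⊆ (Finset.univ \ {k, k'}) := by
    intro j hj
    have hji := (Finset.mem_filter.mp hj).2
    simp only [Finset.mem_sdiff, Finset.mem_univ, true_and, Finset.mem_insert,
      Finset.mem_singleton]
    push_neg
    exact ⟨fun h => hk (h ▸ hji), fun h => hk' (h ▸ hji)⟩
  have h2 : ({k, k'} : Finset (Fin r)).card = 2 := Finset.card_pair hkk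
  have hr2 : 2 ≤ r := by
    have := Finset.card_le_univ ({k, k'} : Finset (Fin r))
    rwa [h2, Fintype.card_fin] at this
  have hcard : (Finset.univ.filter (fun m => f m i = i)).card < r - 1 := by
    have hle := Finset.card_le_card hsub
    rw [Finset.card_sdiff_of_subset (Finset.subset_univ _), h2, Finset.card_univ, Fintype.card_fin] at hle
    omega
  rw [Nat.descFactorial_eq_zero_iff_lt.mpr hcard, zero_smul, mul_zero]

lemma term_dis {r : ℕ} (hr : 1 ≤ r) (A : Matrix (Fin n) (Fin n) ℂ) {f : Fin r → Perm (Fin n)}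
    (hd : Dis f) (i : Fin n) :
    derivative^[r-1] (∏ k, charmatrix A i (f k i)) =
      (((r-1).factorial : Polynomial ℂ)) *
        (if (List.ofFn f).prod i = i then (r : Polynomial ℂ) else 1) *
          charmatrix A i ((List.ofFn f).prod i) := by
  by_cases hσi : (List.ofFn f).prod i = i
  · have hall : ∀ k, f k i = i := (dis_fixed_iff hd i).mp hσi
    have hfil : Finset.univ.filter (fun k : Fin r => f k i = i) = Finset.univ :=
      Finset.filter_true_of_mem (fun k _ => hall k)
    have hfil' : Finset.univ.filter (fun k : Fin r => ¬ f k i = i) = ∅ := by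
      rw [Finset.filter_eq_empty_iff]
      intro k _
      simp [hall k]
    rw [prod_cm_eq, hfil, hfil', Finset.prod_empty, Polynomial.C_1, one_mul, Finset.card_univ,
      Fintype.card_fin, Polynomial.iterate_derivative_X_sub_pow, if_pos hσi, hσi,
      charmatrix_apply_eq]
    have h1 : r - (r - 1) = 1 := by omega
    rw [h1, pow_one, nsmul_eq_mul]
    obtain ⟨s, rfl⟩ := Nat.exists_eq_add_of_le hr
    have h2 : (1 + s).descFactorial (1 + s - 1) = (1 + s).factorial := by
      rw [Nat.add_comm 1 s]
      simpa using df_pred s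
    rw [h2]
    have h3 : (1 + s).factorial = (1 + s - 1).factorial * (1 + s) := by
      rw [Nat.add_comm 1 s, Nat.factorial_succ]
      simp [Nat.mul_comm]
    rw [h3]
    push_cast
    ring
  · obtain ⟨k₀, hk₀, huniq⟩ := existsUnique_mover hd rfl hσi
    have hfil : Finset.univ.filter (fun k : Fin r => f k i = i) = {k₀}ᶜ := by
      ext j
      simp only [Finset.mem_filter, Finset.mem_univ, true_and, Finset.mem_compl,
        Finset.mem_singleton]
      constructor
      · intro hj hjk
        exact hk₀ (hjk ▸ hj)
      · intro hj
        by_contra hji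
        exact hj (huniq j hji)
    have hfil' : Finset.univ.filter (fun k : Fin r => ¬ f k i = i) = {k₀} := by
      ext j
      simp only [Finset.mem_filter, Finset.mem_univ, true_and, Finset.mem_singleton]
      constructor
      · intro hj
        exact huniq j hj
      · intro hj
        subst hj
        exact hk₀
    rw [prod_cm_eq, hfil, hfil', Finset.prod_singleton, Finset.card_compl,
      Finset.card_singleton, Fintype.card_fin, Polynomial.iterate_derivative_C_mul,
      Polynomial.iterate_derivative_X_sub_pow,
      Nat.sub_self, pow_zero, Nat.descFactorial_self, if_neg hσi,
      mover_apply hd rfl hk₀,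
      charmatrix_apply_ne _ _ _ (by
        rw [← mover_apply hd rfl hk₀]
        exact fun h => hk₀ h.symm),
      map_neg]
    push_cast
    ring

lemma fix_card (σ : Perm (Fin n)) :
    (Finset.univ.filter (fun i : Fin n => σ i = i)).card = n - σ.support.card := by
  have h1 := Finset.card_filter_add_card_filter_not
    (s := (Finset.univ : Finset (Fin n))) (p := fun i => σ i = i)
  have h2 : σ.support = Finset.univ.filter (fun i : Fin n => ¬ σ i = i) := by
    ext j
    simp [Perm.mem_support]
  rw [← h2, Finset.card_univ, Fintype.card_fin] at h1
  omega

lemma main_sum (r : ℕ) (hr : 1 ≤ r) (A : Matrix (Fin n) (Fin n) ℂ) :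
    (∑ f : Fin r → Perm (Fin n),
      (((∏ k, (Perm.sign (f k) : ℤ)) : ℤ) : Polynomial ℂ) *
        ∏ i, derivative^[r-1] (∏ k, charmatrix A i (f k i))) =
      (((r-1).factorial : Polynomial ℂ) ^ n) * chir r A := by
  classical
  rw [← Finset.sum_filter_add_sum_filter_not Finset.univ (fun f => Dis f)]
  have hz : ∑ f ∈ Finset.univ.filter (fun f : Fin r → Perm (Fin n) => ¬ Dis f),
      (((∏ k, (Perm.sign (f k) : ℤ)) : ℤ) : Polynomial ℂ) *
        ∏ i, derivative^[r-1] (∏ k, charmatrix A i (f k i)) = 0 := by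
    apply Finset.sum_eq_zero
    intro f hf
    rw [term_zero A (Finset.mem_filter.mp hf).2, mul_zero]
  rw [hz, add_zero]
  -- rewrite each disjoint term
  have hterm : ∀ f ∈ Finset.univ.filter (fun f : Fin r → Perm (Fin n) => Dis f),
      (((∏ k, (Perm.sign (f k) : ℤ)) : ℤ) : Polynomial ℂ) *
        ∏ i, derivative^[r-1] (∏ k, charmatrix A i (f k i)) =
      (((r-1).factorial : Polynomial ℂ) ^ n) *
        ((fun σ : Perm (Fin n) => ((Perm.sign σ : ℤ) : Polynomial ℂ) *
          ((r : Polynomial ℂ) ^ (n - σ.support.card) * ∏ i, charmatrix A i (σ i)))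
            ((List.ofFn f).prod)) := by
    intro f hf
    have hd : Dis f := (Finset.mem_filter.mp hf).2
    have hsgn : (((∏ k, (Perm.sign (f k) : ℤ)) : ℤ) : Polynomial ℂ) =
        ((Perm.sign ((List.ofFn f).prod) : ℤ) : Polynomial ℂ) := by
      rw [sign_ofFn_prod]
      push_cast
      rfl
    rw [hsgn]
    rw [Finset.prod_congr rfl (fun i _ => term_dis hr A hd i)]
    rw [Finset.prod_mul_distrib, Finset.prod_mul_distrib, Finset.prod_const, Finset.prod_ite,
      Finset.prod_const, Finset.prod_const, one_pow, mul_one, fix_card, Finset.card_univ,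
      Fintype.card_fin]
    ring
  rw [Finset.sum_congr rfl hterm, ← Finset.mul_sum]
  congr 1
  -- now group by the product permutation
  have hfib := Finset.sum_fiberwise_of_maps_to'
    (s := Finset.univ.filter (fun f : Fin r → Perm (Fin n) => Dis f))
    (g := fun f : Fin r → Perm (Fin n) => (List.ofFn f).prod)
    (t := (Finset.univ : Finset (Perm (Fin n)))) (fun f _ => Finset.mem_univ _)
    (fun σ : Perm (Fin n) => ((Perm.sign σ : ℤ) : Polynomial ℂ) *
      ((r : Polynomial ℂ) ^ (n - σ.support.card) * ∏ i, charmatrix A i (σ i)))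
  rw [← hfib]
  rw [chir, detr]
  apply Finset.sum_congr rfl
  intro σ _
  rw [Finset.sum_const, Finset.filter_filter, card_dis_prod, nsmul_eq_mul]
  have hcc : (r : Polynomial ℂ) ^ cycleCount σ =
      (r : Polynomial ℂ) ^ σ.cycleType.card * (r : Polynomial ℂ) ^ (n - σ.support.card) := by
    rw [← pow_add, cycleCount, Fintype.card_fin]
  rw [hcc]
  push_cast
  ring

/-- `χ_r[A](x) = (1/(r-1)!)^n ∂^{r-1}_{z₁} ⋯ ∂^{r-1}_{z_n} det(Z-A)^r`, all variables then
set equal to `x`. -/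
theorem chir_eq_iterated_deriv {n : ℕ} (r : ℕ) (hr : 1 ≤ r)
    (A : Matrix (Fin n) (Fin n) ℂ) :
    chir r A = (((r-1).factorial : ℂ) ^ n)⁻¹ •
      MvPolynomial.aeval (fun _ : Fin n => (Polynomial.X : Polynomial ℂ))
        (((List.ofFn (fun i : Fin n => (pd i) ^ (r-1))).prod) ((ZsubA A).det ^ r)) := by
  rw [rhs_sum r A, main_sum r hr A]
  have hC : (((r-1).factorial : Polynomial ℂ))^n = Polynomial.C (((r-1).factorial : ℂ) ^ n) := by
    rw [map_pow, map_natCast (Polynomial.C : ℂ →+* Polynomial ℂ)]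
  rw [hC, ← Polynomial.smul_eq_C_mul, smul_smul,
    inv_mul_cancel₀ (pow_ne_zero n (Nat.cast_ne_zero.mpr (Nat.factorial_ne_zero _))), one_smul]

end parte
end

section
/- Let A be an n×n complex matrix (not necessarily Hermitian) with n ≥ 1 and let r ≥ 1 be an integer. Then r·Σ_{i=1}^n χ_r[A_i](x) = (d/dx) χ_r[A](x), as an identity of polynomials in x. -/
/-! Expanding `det_r(xI - A)` over permutations and differentiating each product by the Leibniz
rule, the factor `(xI - A)_{j σ(j)}` has derivative `1` if `σ j = j` and `0` otherwise. So the
derivative is a sum over `j` of the terms of permutations fixing `j` with the `j`-th factor removed.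
These permutations are the extensions of the permutations `τ` of the other indices; the extension
keeps the sign and adds the fixed point `j` as one more cycle, which produces the factor `r` in
front of `χ_r[A_j]`. -/

open Polynomial Matrix

namespace Equiv.Perm

variable {α β : Type*} [Fintype α] [DecidableEq α] [Fintype β] [DecidableEq β]

theorem cycleCount_extendDomain {p : β → Prop} [DecidablePred p] (f : α ≃ Subtype p)
    (τ : Perm α) :
    cycleCount (τ.extendDomain f) = cycleCount τ + (Fintype.card β - Fintype.card α) := by
  have hαβ : Fintype.card α ≤ Fintype.card β :=
    (Fintype.card_congr f).trans_le (Fintype.card_subtype_le p)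
  have hτ := Finset.card_le_univ τ.support
  unfold cycleCount
  rw [cycleType_extendDomain, card_support_extend_domain]
  omega

theorem sum_filter_apply_eq_self_eq_sum_extendDomain {M : Type*} [AddCommMonoid M] (j : β)
    (f : α ≃ {b // b ≠ j}) (g : Perm β → M) :
    ∑ σ ∈ Finset.univ.filter (fun σ : Perm β => σ j = j), g σ
      = ∑ τ : Perm α, g (τ.extendDomain f) := by
  have hfix : ∀ σ : Perm β, σ j = j ↔ ∀ b, ¬ b ≠ j → σ b = b := by simp
  rw [Finset.filter_congr fun σ _ => hfix σ, ← Finset.sum_subtype_eq_sum_filter,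
    Finset.subtype_univ]
  exact ((f.permCongr.trans (Perm.subtypeEquivSubtypePerm _)).sum_comp (fun σ => g σ.1)).symm

end Equiv.Perm

namespace Matrix

variable {β : Type*} [Fintype β] [DecidableEq β] {R : Type*} [CommRing R]

theorem derivative_charmatrix_apply (A : Matrix β β R) (i j : β) :
    derivative (charmatrix A i j) = if i = j then 1 else 0 := by
  by_cases h : i = j
  · subst h; simp [charmatrix_apply_eq]
  · simp [h]

theorem charmatrix_submatrix {α : Type*} [Fintype α] [DecidableEq α] (A : Matrix β β R)
    {e : α → β} (he : Function.Injective e) :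
    charmatrix (A.submatrix e e) = (charmatrix A).submatrix e e := by
  ext i k
  simp [charmatrix_apply, diagonal_apply, he.eq_iff]

end Matrix

open Equiv Perm

section

variable {β : Type*} [Fintype β] [DecidableEq β] {R : Type*} [CommRing R]

theorem derivative_detr_charmatrix (r : ℕ) (A : Matrix β β R) :
    derivative (detr r (charmatrix A)) =
      ∑ j, ∑ σ ∈ Finset.univ.filter (fun σ : Perm β => σ j = j),
        ((sign σ : ℤ) : R[X]) * (r : R[X]) ^ cycleCount σ *
          ∏ i ∈ Finset.univ.erase j, charmatrix A i (σ i) := by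
  simp_rw [Finset.sum_filter]
  rw [Finset.sum_comm, detr, derivative_sum]
  refine Finset.sum_congr rfl fun σ _ => ?_
  have hconst : derivative (((sign σ : ℤ) : R[X]) * (r : R[X]) ^ cycleCount σ) = 0 := by
    simp [derivative_pow]
  rw [derivative_mul, hconst, zero_mul, zero_add, derivative_prod_finset, Finset.mul_sum]
  refine Finset.sum_congr rfl fun j _ => ?_
  rw [derivative_charmatrix_apply]
  by_cases h : σ j = j
  · simp [h, mul_assoc]
  · simp [h, Ne.symm h]

theorem mul_detr_charmatrix_submatrix {α : Type*} [Fintype α] [DecidableEq α] (r : ℕ)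
    (A : Matrix β β R) (j : β) (f : α ≃ {b // b ≠ j}) :
    (r : R[X]) * detr r (charmatrix (A.submatrix (Subtype.val ∘ f) (Subtype.val ∘ f))) =
      ∑ σ ∈ Finset.univ.filter (fun σ : Perm β => σ j = j),
        ((sign σ : ℤ) : R[X]) * (r : R[X]) ^ cycleCount σ *
          ∏ i ∈ Finset.univ.erase j, charmatrix A i (σ i) := by
  have hcard : Fintype.card β - Fintype.card α = 1 := by
    have hβ : 0 < Fintype.card β := Fintype.card_pos_iff.mpr ⟨j⟩
    simp only [Fintype.card_congr f, Fintype.card_subtype_compl, Fintype.card_unique]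
    omega
  rw [sum_filter_apply_eq_self_eq_sum_extendDomain j f, detr, Finset.mul_sum,
    charmatrix_submatrix A (Subtype.val_injective.comp f.injective)]
  refine Finset.sum_congr rfl fun τ _ => ?_
  have hprod : ∏ i ∈ Finset.univ.erase j, charmatrix A i (τ.extendDomain f i) =
      ∏ a, charmatrix A (f a) (f (τ a)) := by
    rw [Finset.prod_subtype _ (p := (· ≠ j)) (fun b => by simp), ← f.prod_comp]
    simp
  rw [hprod, cycleCount_extendDomain, hcard, sign_extendDomain, pow_succ]
  simp only [submatrix_apply, Function.comp_apply]
  ring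

end

theorem chir_thompson_formula_general {n : ℕ} (r : ℕ)
    (A : Matrix (Fin (n+1)) (Fin (n+1)) ℂ) :
    (r : ℂ) • ∑ i : Fin (n+1), chir r (A.submatrix i.succAbove i.succAbove)
      = Polynomial.derivative (chir r A) := by
  rw [chir, derivative_detr_charmatrix, Finset.smul_sum]
  refine Finset.sum_congr rfl fun j _ => ?_
  rw [← mul_detr_charmatrix_submatrix r A j (finSuccAboveEquiv j), chir, smul_eq_C_mul,
    map_natCast]
  rfl

/-- Thompson-type formula for the `r`-characteristic polynomial: for an `(n+1)×(n+1)`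
complex matrix `A` (not necessarily Hermitian), `r Σ_i χ_r[A_i] = (χ_r[A])'`, where `A_i`
deletes the `i`-th row and column. -/
theorem chir_thompson_formula {n : ℕ} (r : ℕ) (hr : 1 ≤ r)
    (A : Matrix (Fin (n+1)) (Fin (n+1)) ℂ) :
    (r : ℂ) • ∑ i : Fin (n+1), chir r (A.submatrix i.succAbove i.succAbove)
      = Polynomial.derivative (chir r A) :=
  chir_thompson_formula_general r A
end

section
/- Let A be an n×n complex matrix, r ≥ 1 an integer, and Z = diag(z₁,…,z_n) the diagonal matrix of indeterminates. Then, as an identity in the multivariate polynomial ring ℂ[z₁,…,z_n]: ((r−1)!)^n · det_r(Z + A) = (∂^{r−1}/∂z₁^{r−1} ⋯ ∂^{r−1}/∂z_n^{r−1}) (det(Z + A))^r. -/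
open Polynomial Matrix

/-- The matrix `Z + A`, where `Z = diag(z₁,…,z_n)` is the diagonal matrix of indeterminates. -/
noncomputable def ZaddA {n : ℕ} (A : Matrix (Fin n) (Fin n) ℂ) :
    Matrix (Fin n) (Fin n) (MvPolynomial (Fin n) ℂ) :=
  Matrix.of fun i j => (if i = j then MvPolynomial.X i else 0) + MvPolynomial.C (A i j)

/-!
Expanding each of the `r` factors of `det (Z + A) ^ r` over permutations writes it as a sum over
`r`-tuples `g` of permutations, in which row `i` contributes `∏ₖ (Z + A) i (gₖ i)`. That product
involves `zᵢ` only, as `(zᵢ + aᵢᵢ) ^ e` times a constant, where `e` is the number of `gₖ` fixing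
`i`; so `∂ᵢ^(r-1)` kills it unless at most one `gₖ` moves `i`. Hence only tuples of pairwise
disjoint permutations survive, and such a tuple with product `σ` contributes
`(r-1)!ⁿ · r^(#fixed points of σ) · sgn σ · ∏ᵢ (Z + A) i (σ i)`. Disjoint tuples with product `σ`
are the same as colourings of the nontrivial cycles of `σ` with `r` colours, so there are
`r^(#nontrivial cycles of σ)` of them, and the two powers of `r` combine to `r^c(σ)`.
-/

namespace Derivation

variable {R A : Type*} [CommSemiring R] [CommSemiring A] [Algebra R A] (D : Derivation R A A)

theorem apply_prod_eq_zero {ι : Type*} (s : Finset ι) (f : ι → A) (h : ∀ i ∈ s, D (f i) = 0) :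
    D (∏ i ∈ s, f i) = 0 :=
  Finset.prod_induction f (fun a => D a = 0) (fun a b ha hb => by simp [D.leibniz, ha, hb])
    D.map_one_eq_zero h

theorem pow_apply_mul_of_apply_eq_zero {v : A} (hv : D v = 0) (m : ℕ) (u : A) :
    (D.toLinearMap ^ m) (u * v) = (D.toLinearMap ^ m) u * v := by
  induction m with
  | zero => rfl
  | succ m ih =>
    simp only [pow_succ', Module.End.mul_apply, ih, coeFn_coe, D.leibniz, hv, smul_eq_mul,
      mul_zero, zero_add]
    exact mul_comm _ _

theorem pow_apply_pow_of_apply_eq_one {P : A} (hP : D P = 1) (m e : ℕ) :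
    (D.toLinearMap ^ m) (P ^ e) = e.descFactorial m • P ^ (e - m) := by
  induction m with
  | zero => simp
  | succ m ih =>
    rw [pow_succ', Module.End.mul_apply, ih, coeFn_coe, map_nsmul, D.leibniz_pow, hP,
      smul_eq_mul, mul_one, smul_smul, Nat.descFactorial_succ, Nat.sub_sub, mul_comm]

theorem pow_apply_prod_comp {ι κ : Type*} [Fintype κ] [DecidableEq ι] {f : ι → A} {i : ι}
    (hi : D (f i) = 1) (hj : ∀ j ≠ i, D (f j) = 0) (v : κ → ι) (m : ℕ) :
    (D.toLinearMap ^ m) (∏ k, f (v k))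
      = (Finset.univ.filter (v · = i)).card.descFactorial m
        • (f i ^ ((Finset.univ.filter (v · = i)).card - m) * ∏ k with v k ≠ i, f (v k)) := by
  have hsplit : ∏ k, f (v k)
      = f i ^ (Finset.univ.filter (v · = i)).card * ∏ k with v k ≠ i, f (v k) := by
    rw [← Finset.prod_filter_mul_prod_filter_not Finset.univ (v · = i), ← Finset.prod_const]
    congr 1
    exact Finset.prod_congr rfl fun k hk => by rw [(Finset.mem_filter.mp hk).2]
  rw [hsplit, D.pow_apply_mul_of_apply_eq_zero (D.apply_prod_eq_zero _ _ fun k hk =>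
      hj _ (Finset.mem_filter.mp hk).2), D.pow_apply_pow_of_apply_eq_one hi, smul_mul_assoc]

end Derivation

namespace MvPolynomial

variable {R σ : Type*}

theorem pderiv_pderiv_comm [CommRing R] (i j : σ) (p : MvPolynomial σ R) :
    pderiv i (pderiv j p) = pderiv j (pderiv i p) := by
  classical
  have h : ⁅pderiv i, pderiv j⁆ = (0 : Derivation R (MvPolynomial σ R) (MvPolynomial σ R)) :=
    derivation_ext fun k => by
      rw [Derivation.commutator_apply, Derivation.zero_apply]
      simp [pderiv_X, Pi.single_apply, apply_ite]
  exact sub_eq_zero.mp congr($h p)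

theorem pderiv_pderiv_pow_apply_eq_zero [CommRing R] {i j : σ} {p : MvPolynomial σ R}
    (hp : pderiv j p = 0) (m : ℕ) : pderiv j (((pderiv i).toLinearMap ^ m) p) = 0 := by
  induction m with
  | zero => exact hp
  | succ m ih =>
    rw [pow_succ', Module.End.mul_apply, Derivation.coeFn_coe, pderiv_pderiv_comm, ih, map_zero]

theorem pderiv_pow_apply_prod [CommSemiring R] [Fintype σ] [DecidableEq σ] (m : ℕ) (j : σ)
    (B : σ → MvPolynomial σ R) (hB : ∀ i ≠ j, pderiv j (B i) = 0) :
    ((pderiv j).toLinearMap ^ m) (∏ i, B i)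
      = ∏ i, if i = j then ((pderiv j).toLinearMap ^ m) (B j) else B i := by
  rw [← Finset.mul_prod_erase _ _ (Finset.mem_univ j),
    ← Finset.mul_prod_erase _ _ (Finset.mem_univ j), if_pos rfl,
    Derivation.pow_apply_mul_of_apply_eq_zero _ ((pderiv j).apply_prod_eq_zero _ _
      fun i hi => hB i (Finset.ne_of_mem_erase hi))]
  congr 1
  exact Finset.prod_congr rfl fun i hi => (if_neg (Finset.ne_of_mem_erase hi)).symm

theorem list_prod_pderiv_pow_apply_prod [CommRing R] [Fintype σ] [DecidableEq σ] (m : ℕ)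
    (B : σ → MvPolynomial σ R) (hB : ∀ i, ∀ j ≠ i, pderiv j (B i) = 0) {K : List σ}
    (hK : K.Nodup) :
    (K.map fun i => (pderiv i).toLinearMap ^ m).prod (∏ i, B i)
      = ∏ i, if i ∈ K then ((pderiv i).toLinearMap ^ m) (B i) else B i := by
  induction K with
  | nil => simp
  | cons j K ih =>
    obtain ⟨hjK, hK⟩ := List.nodup_cons.mp hK
    rw [List.map_cons, List.prod_cons, Module.End.mul_apply, ih hK, pderiv_pow_apply_prod]
    · refine Finset.prod_congr rfl fun i _ => ?_
      by_cases hij : i = j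
      · subst hij; simp [hjK]
      · simp [hij]
    · intro i hij
      split_ifs
      · exact pderiv_pderiv_pow_apply_eq_zero (hB i j (Ne.symm hij)) m
      · exact hB i j (Ne.symm hij)

end MvPolynomial

theorem Matrix.det_pow_eq_sum {ι R : Type*} [Fintype ι] [DecidableEq ι] [CommRing R]
    (M : Matrix ι ι R) (r : ℕ) :
    M.det ^ r = ∑ g : Fin r → Equiv.Perm ι,
      ((Equiv.Perm.sign (List.ofFn g).prod : ℤ) : R) * ∏ i, ∏ k, M i (g k i) := by
  have hdet : M.det = ∑ σ : Equiv.Perm ι, ((Equiv.Perm.sign σ : ℤ) : R) * ∏ i, M i (σ i) := by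
    rw [← det_transpose, det_apply']
    rfl
  rw [hdet, ← Fin.prod_const, Finset.prod_univ_sum]
  refine Finset.sum_congr rfl fun g _ => ?_
  rw [Finset.prod_mul_distrib, Finset.prod_comm (s := Finset.univ)]
  simp [MonoidHom.map_list_prod, List.prod_ofFn]

namespace Equiv.Perm

theorem SameCycle.apply_eq_of_invariant {ι α : Type*} [Finite ι] {σ : Perm ι} {c : ι → α}
    (hc : ∀ x, c (σ x) = c x) {x y : ι} (h : σ.SameCycle x y) : c x = c y := by
  obtain ⟨n, rfl⟩ := h.exists_nat_pow_eq
  clear h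
  induction n with
  | zero => rfl
  | succ n ih => rw [pow_succ', mul_apply, hc, ih]

variable {ι : Type*} {r : ℕ}

def colorPart (σ : Perm ι) (c : ι → Option (Fin r)) (hc : ∀ x, c (σ x) = c x) (k : Fin r) :
    Perm ι :=
  ofSubtype (σ.subtypePerm (p := fun x => c x = some k) fun x => by rw [hc])

theorem colorPart_apply {σ : Perm ι} {c : ι → Option (Fin r)} (hc : ∀ x, c (σ x) = c x)
    (k : Fin r) (x : ι) : colorPart σ c hc k x = if c x = some k then σ x else x := by
  unfold colorPart
  split_ifs with h
  · exact ofSubtype_apply_of_mem (p := fun y => c y = some k) _ h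
  · exact ofSubtype_apply_of_not_mem (p := fun y => c y = some k) _ h

variable [DecidableEq ι]

theorem filter_apply_ne_self_eq_singleton {g : Fin r → Perm ι}
    (hg : Pairwise fun k l => Disjoint (g k) (g l)) {k : Fin r} {x : ι} (hk : g k x ≠ x) :
    Finset.univ.filter (fun l => g l x ≠ x) = {k} := by
  ext l
  simp only [Finset.mem_filter, Finset.mem_univ, true_and, Finset.mem_singleton]
  refine ⟨fun hl => ?_, fun hl => hl ▸ hk⟩
  by_contra hlk
  exact (hg hlk x).elim hl hk

variable [Fintype ι]

theorem prod_ofFn_apply_of_apply_ne {g : Fin r → Perm ι}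
    (hg : Pairwise fun k l => Disjoint (g k) (g l)) {k : Fin r} {x : ι} (hx : g k x ≠ x) :
    (List.ofFn g).prod x = g k x :=
  (eq_on_support_mem_disjoint (List.mem_ofFn.mpr ⟨k, rfl⟩)
    (List.pairwise_ofFn.mpr fun _ _ h => hg h.ne) x (mem_support.mpr hx)).symm

theorem prod_ofFn_apply_eq_self_iff {g : Fin r → Perm ι}
    (hg : Pairwise fun k l => Disjoint (g k) (g l)) {x : ι} :
    (List.ofFn g).prod x = x ↔ ∀ k, g k x = x := by
  refine ⟨fun hx k => ?_, fun hx => ?_⟩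
  · by_contra hk
    exact hk (prod_ofFn_apply_of_apply_ne hg hk ▸ hx)
  · by_contra h
    obtain ⟨f, hf, hxf⟩ := exists_mem_support_of_mem_support_prod (mem_support.mpr h)
    obtain ⟨k, rfl⟩ := List.mem_ofFn.mp hf
    exact mem_support.mp hxf (hx k)

theorem apply_prod_ofFn_apply_ne_iff {g : Fin r → Perm ι}
    (hg : Pairwise fun k l => Disjoint (g k) (g l)) (k : Fin r) (x : ι) :
    g k ((List.ofFn g).prod x) ≠ (List.ofFn g).prod x ↔ g k x ≠ x := by
  have hmove : ∀ {l}, g l x ≠ x → (List.ofFn g).prod x = g l x ∧ g l (g l x) ≠ g l x :=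
    fun hl => ⟨prod_ofFn_apply_of_apply_ne hg hl, fun h => hl ((g _).injective h)⟩
  refine ⟨fun hk hkx => ?_, fun hk => (hmove hk).1 ▸ (hmove hk).2⟩
  by_cases hfix : (List.ofFn g).prod x = x
  · rw [hfix] at hk
    exact hk hkx
  · obtain ⟨l, hl⟩ : ∃ l, g l x ≠ x := by
      simpa using (prod_ofFn_apply_eq_self_iff hg).not.mp hfix
    have hkl : k ≠ l := fun h => hl (h ▸ hkx)
    rw [(hmove hl).1] at hk
    exact (hg hkl (g l x)).elim hk (hmove hl).2

def cycleColorings (σ : Perm ι) (r : ℕ) : Finset (ι → Option (Fin r)) :=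
  {c | (∀ x, c (σ x) = c x) ∧ ∀ x, c x = none ↔ σ x = x}

theorem mem_cycleColorings {σ : Perm ι} {c : ι → Option (Fin r)} :
    c ∈ cycleColorings σ r ↔ (∀ x, c (σ x) = c x) ∧ ∀ x, c x = none ↔ σ x = x := by
  simp [cycleColorings]

def colorByCycle (σ : Perm ι) (f : σ.cycleFactorsFinset → Fin r) (x : ι) : Option (Fin r) :=
  if hx : x ∈ σ.support then some (f ⟨σ.cycleOf x, cycleOf_mem_cycleFactorsFinset_iff.mpr hx⟩)
  else none

theorem colorByCycle_injective (σ : Perm ι) :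
    Function.Injective (colorByCycle σ (r := r)) := by
  intro f f' h
  funext τ
  obtain ⟨x, hx⟩ := (mem_cycleFactorsFinset_iff.mp τ.2).1.nonempty_support
  have hxσ := mem_cycleFactorsFinset_support_le τ.2 hx
  have hτ : τ = ⟨σ.cycleOf x, cycleOf_mem_cycleFactorsFinset_iff.mpr hxσ⟩ :=
    Subtype.ext (cycle_is_cycleOf hx τ.2)
  have hfx := congrFun h x
  simp only [colorByCycle, dif_pos hxσ, Option.some.injEq, ← hτ] at hfx
  exact hfx

theorem colorByCycle_mem_cycleColorings (σ : Perm ι) (f : σ.cycleFactorsFinset → Fin r) :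
    colorByCycle σ f ∈ cycleColorings σ r := by
  refine mem_cycleColorings.mpr ⟨fun x => ?_, fun x => ?_⟩ <;> by_cases hx : x ∈ σ.support
  · simp only [colorByCycle, dif_pos hx, dif_pos (apply_mem_support.mpr hx), cycleOf_self_apply]
  · simp only [colorByCycle, dif_neg hx, dif_neg (mt apply_mem_support.mp hx)]
  · simp [colorByCycle, mem_support.mp hx]
  · simp [colorByCycle, notMem_support.mp hx]

theorem exists_colorByCycle_eq {σ : Perm ι} {c : ι → Option (Fin r)}
    (hc : c ∈ cycleColorings σ r) : ∃ f, colorByCycle σ f = c := by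
  obtain ⟨hinv, hnone⟩ := mem_cycleColorings.mp hc
  have hconst : ∀ τ : σ.cycleFactorsFinset, ∃ k, ∀ y ∈ τ.1.support, c y = some k := by
    intro τ
    obtain ⟨x, hx⟩ := (mem_cycleFactorsFinset_iff.mp τ.2).1.nonempty_support
    have hxσ := mem_cycleFactorsFinset_support_le τ.2 hx
    obtain ⟨k, hk⟩ := Option.ne_none_iff_exists'.mp ((hnone x).not.mpr (mem_support.mp hxσ))
    refine ⟨k, fun y hy => ?_⟩
    rw [cycle_is_cycleOf hx τ.2] at hy
    rw [← hk]
    exact (SameCycle.apply_eq_of_invariant hinv (mem_support_cycleOf_iff.mp hy).1).symm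
  choose f hf using hconst
  refine ⟨f, funext fun x => ?_⟩
  by_cases hx : x ∈ σ.support
  · simp only [colorByCycle, dif_pos hx]
    exact (hf ⟨σ.cycleOf x, cycleOf_mem_cycleFactorsFinset_iff.mpr hx⟩ x
      (mem_support_cycleOf_iff.mpr ⟨SameCycle.refl _ _, hx⟩)).symm
  · simp only [colorByCycle, dif_neg hx]
    exact ((hnone x).mpr (notMem_support.mp hx)).symm

theorem card_cycleColorings (σ : Perm ι) (r : ℕ) :
    (cycleColorings σ r).card = r ^ σ.cycleType.card := by
  have himage : cycleColorings σ r = Finset.univ.image (colorByCycle σ) := by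
    ext c
    simp only [Finset.mem_image, Finset.mem_univ, true_and]
    exact ⟨exists_colorByCycle_eq, fun ⟨f, hf⟩ => hf ▸ colorByCycle_mem_cycleColorings σ f⟩
  rw [himage, Finset.card_image_of_injective _ (colorByCycle_injective σ), Finset.card_univ,
    Fintype.card_fun, Fintype.card_coe, Fintype.card_fin, cycleType_def, Multiset.card_map]
  rfl

theorem colorPart_apply_ne_self_iff {σ : Perm ι} {c : ι → Option (Fin r)}
    (hc : c ∈ cycleColorings σ r) (k : Fin r) (x : ι) :
    colorPart σ c (mem_cycleColorings.mp hc).1 k x ≠ x ↔ c x = some k := by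
  rw [colorPart_apply]
  split_ifs with h
  · simpa [h] using (mem_cycleColorings.mp hc).2 x
  · simpa using h

theorem pairwise_disjoint_colorPart {σ : Perm ι} {c : ι → Option (Fin r)}
    (hc : c ∈ cycleColorings σ r) :
    Pairwise fun k l => Disjoint (colorPart σ c (mem_cycleColorings.mp hc).1 k)
      (colorPart σ c (mem_cycleColorings.mp hc).1 l) := by
  intro k l hkl x
  by_contra! h
  rw [colorPart_apply_ne_self_iff hc, colorPart_apply_ne_self_iff hc] at h
  exact hkl (Option.some_injective _ (h.1.symm.trans h.2))

theorem prod_ofFn_colorPart {σ : Perm ι} {c : ι → Option (Fin r)}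
    (hc : c ∈ cycleColorings σ r) :
    (List.ofFn (colorPart σ c (mem_cycleColorings.mp hc).1)).prod = σ := by
  ext x
  cases hcx : c x with
  | none =>
    rw [((mem_cycleColorings.mp hc).2 x).mp hcx,
      prod_ofFn_apply_eq_self_iff (pairwise_disjoint_colorPart hc)]
    intro k
    by_contra hk
    simp [(colorPart_apply_ne_self_iff hc k x).mp hk] at hcx
  | some k =>
    have hk := (colorPart_apply_ne_self_iff hc k x).mpr hcx
    rw [prod_ofFn_apply_of_apply_ne (pairwise_disjoint_colorPart hc) hk, colorPart_apply,
      if_pos hcx]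

theorem exists_mem_cycleColorings_of_pairwise_disjoint {g : Fin r → Perm ι}
    (hg : Pairwise fun k l => Disjoint (g k) (g l)) :
    ∃ c ∈ cycleColorings (List.ofFn g).prod r, ∀ k x, c x = some k ↔ g k x ≠ x := by
  have hmover : ∀ x, ∃ o : Option (Fin r), ∀ k, o = some k ↔ g k x ≠ x := by
    intro x
    by_cases h : ∃ k, g k x ≠ x
    · obtain ⟨k, hk⟩ := h
      refine ⟨some k, fun l => ⟨fun hkl => Option.some_injective _ hkl ▸ hk, fun hl => ?_⟩⟩
      by_contra hkl
      exact (hg (fun h => hkl (congrArg some h)) x).elim hk hl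
    · simp only [not_exists, not_not] at h
      exact ⟨none, by simp [h]⟩
  choose c hc using hmover
  refine ⟨c, mem_cycleColorings.mpr ⟨fun x => Option.ext fun k => ?_, fun x => ?_⟩,
    fun k x => hc x k⟩
  · rw [hc, hc, apply_prod_ofFn_apply_ne_iff hg]
  · simp [Option.eq_none_iff_forall_ne_some, hc, prod_ofFn_apply_eq_self_iff hg]

open Classical in
theorem card_pairwise_disjoint_prod_ofFn_eq (σ : Perm ι) :
    (Finset.univ.filter fun g : Fin r → Perm ι =>
      (Pairwise fun k l => Disjoint (g k) (g l)) ∧ (List.ofFn g).prod = σ).card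
      = r ^ σ.cycleType.card := by
  rw [← card_cycleColorings σ r]
  symm
  refine Finset.card_bij (fun c hc => colorPart σ c (mem_cycleColorings.mp hc).1)
    (fun c hc => ?_) (fun c hc c' hc' h => ?_) (fun g hg => ?_)
  · simpa using ⟨pairwise_disjoint_colorPart hc, prod_ofFn_colorPart hc⟩
  · funext x
    refine Option.ext fun k => ?_
    rw [← colorPart_apply_ne_self_iff hc, ← colorPart_apply_ne_self_iff hc', h]
  · obtain ⟨hdisj, rfl⟩ := (Finset.mem_filter.mp hg).2
    obtain ⟨c, hc, hck⟩ := exists_mem_cycleColorings_of_pairwise_disjoint hdisj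
    refine ⟨c, hc, funext fun k => Equiv.ext fun x => ?_⟩
    rw [colorPart_apply]
    split_ifs with h
    · exact prod_ofFn_apply_of_apply_ne hdisj ((hck k x).mp h)
    · exact (not_not.mp ((hck k x).not.mp h)).symm

open Classical in
theorem sum_pairwise_disjoint {M : Type*} [AddCommMonoid M] (F : Perm ι → M) :
    ∑ g : Fin r → Perm ι with Pairwise (fun k l => Disjoint (g k) (g l)), F (List.ofFn g).prod
      = ∑ σ, r ^ σ.cycleType.card • F σ := by
  rw [← Finset.sum_fiberwise' _ (fun g => (List.ofFn g).prod)]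
  refine Finset.sum_congr rfl fun σ _ => ?_
  rw [Finset.sum_const, Finset.filter_filter, card_pairwise_disjoint_prod_ofFn_eq]

end Equiv.Perm

theorem Nat.descFactorial_sub_one {r : ℕ} (hr : 1 ≤ r) :
    r.descFactorial (r - 1) = (r - 1).factorial * r := by
  have := Nat.factorial_mul_descFactorial (Nat.sub_le r 1)
  rw [Nat.sub_sub_self hr, Nat.factorial_one, one_mul] at this
  rw [this, mul_comm, Nat.mul_factorial_pred (by omega)]

theorem pow_cycleCount {ι : Type*} [Fintype ι] [DecidableEq ι] (σ : Equiv.Perm ι) (r : ℕ) :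
    r ^ cycleCount σ = r ^ σ.cycleType.card * ∏ i, if σ i = i then r else 1 := by
  have hcard := Finset.card_filter_add_card_filter_not (s := Finset.univ) (p := fun i => σ i = i)
  change _ + σ.support.card = Finset.univ.card at hcard
  rw [Finset.card_univ] at hcard
  rw [cycleCount, pow_add, Finset.prod_ite, Finset.prod_const, Finset.prod_const_one, mul_one]
  congr 2
  omega

section ZaddA

variable {n : ℕ} (A : Matrix (Fin n) (Fin n) ℂ)

theorem pderiv_ZaddA_self (i : Fin n) : MvPolynomial.pderiv i (ZaddA A i i) = 1 := by
  simp [ZaddA]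

theorem pderiv_ZaddA_eq_zero {i j l : Fin n} (h : j ≠ i ∨ l ≠ i) :
    MvPolynomial.pderiv j (ZaddA A i l) = 0 := by
  by_cases hil : i = l
  · subst hil
    simp [ZaddA, MvPolynomial.pderiv_X_of_ne (h.resolve_right (not_not.mpr rfl)).symm]
  · simp [ZaddA, hil]

theorem pd_pow_prod_ZaddA_eq_zero {r : ℕ} {g : Fin r → Equiv.Perm (Fin n)} {i : Fin n}
    {k l : Fin r} (hk : g k i ≠ i) (hl : g l i ≠ i) (hkl : k ≠ l) :
    (pd i ^ (r - 1)) (∏ k, ZaddA A i (g k i)) = 0 := by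
  have hmovers : 1 < (Finset.univ.filter fun k => ¬ g k i = i).card :=
    Finset.one_lt_card.mpr ⟨k, by simpa using hk, l, by simpa using hl, hkl⟩
  have hcard := Finset.card_filter_add_card_filter_not (s := Finset.univ) (p := fun k => g k i = i)
  rw [Finset.card_univ, Fintype.card_fin] at hcard
  rw [pd, (MvPolynomial.pderiv i).pow_apply_prod_comp (pderiv_ZaddA_self A i)
    (fun l hl => pderiv_ZaddA_eq_zero A (Or.inr hl)),
    Nat.descFactorial_eq_zero_iff_lt.mpr (by omega), zero_smul]

theorem pd_pow_prod_ZaddA_of_pairwise_disjoint {r : ℕ} (hr : 1 ≤ r)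
    {g : Fin r → Equiv.Perm (Fin n)} (hg : Pairwise fun k l => (g k).Disjoint (g l)) (i : Fin n) :
    (pd i ^ (r - 1)) (∏ k, ZaddA A i (g k i))
      = (((r - 1).factorial * if (List.ofFn g).prod i = i then r else 1 : ℕ)
          : MvPolynomial (Fin n) ℂ) * ZaddA A i ((List.ofFn g).prod i) := by
  have hcard := Finset.card_filter_add_card_filter_not (s := Finset.univ) (p := fun k => g k i = i)
  rw [Finset.card_univ, Fintype.card_fin] at hcard
  rw [pd, (MvPolynomial.pderiv i).pow_apply_prod_comp (pderiv_ZaddA_self A i)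
    (fun l hl => pderiv_ZaddA_eq_zero A (Or.inr hl))]
  by_cases hσ : (List.ofFn g).prod i = i
  · have hmovers : Finset.univ.filter (fun k => ¬ g k i = i) = ∅ :=
      Finset.filter_false_of_mem fun k _ =>
        not_not.mpr ((Equiv.Perm.prod_ofFn_apply_eq_self_iff hg).mp hσ k)
    rw [hmovers, Finset.card_empty, add_zero] at hcard
    rw [hmovers, hcard, Finset.prod_empty, if_pos hσ, hσ, Nat.sub_sub_self hr, pow_one, mul_one,
      Nat.descFactorial_sub_one hr, nsmul_eq_mul]
  · obtain ⟨k, hk⟩ : ∃ k, g k i ≠ i := by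
      simpa using (Equiv.Perm.prod_ofFn_apply_eq_self_iff hg).not.mp hσ
    have hmovers := Equiv.Perm.filter_apply_ne_self_eq_singleton hg hk
    rw [hmovers, Finset.card_singleton] at hcard
    rw [hmovers, Finset.prod_singleton, if_neg hσ, ← Equiv.Perm.prod_ofFn_apply_of_apply_ne hg hk,
      show (Finset.univ.filter fun k => g k i = i).card = r - 1 by omega, Nat.sub_self, pow_zero,
      one_mul, Nat.descFactorial_self, mul_one, nsmul_eq_mul]

noncomputable def survivingTerm (r : ℕ) (σ : Equiv.Perm (Fin n)) : MvPolynomial (Fin n) ℂ :=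
  (((r - 1).factorial ^ n * ∏ i, if σ i = i then r else 1 : ℕ) : MvPolynomial (Fin n) ℂ)
    * ∏ i, ZaddA A i (σ i)

theorem smul_detr_ZaddA (r : ℕ) :
    ((r - 1).factorial : ℂ) ^ n • detr r (ZaddA A)
      = ∑ σ, r ^ σ.cycleType.card
          • (((Equiv.Perm.sign σ : ℤ) : MvPolynomial (Fin n) ℂ) * survivingTerm A r σ) := by
  rw [detr, Finset.smul_sum]
  refine Finset.sum_congr rfl fun σ _ => ?_
  have hpow := congrArg (Nat.cast (R := MvPolynomial (Fin n) ℂ)) (pow_cycleCount σ r)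
  push_cast at hpow
  rw [MvPolynomial.smul_eq_C_mul, nsmul_eq_mul, hpow, survivingTerm, map_pow, map_natCast]
  push_cast
  ring

open Classical in
theorem list_prod_pd_pow_prod_ZaddA {r : ℕ} (hr : 1 ≤ r) (g : Fin r → Equiv.Perm (Fin n)) :
    (List.ofFn fun i : Fin n => pd i ^ (r - 1)).prod (∏ i, ∏ k, ZaddA A i (g k i))
      = if Pairwise fun k l => (g k).Disjoint (g l) then survivingTerm A r (List.ofFn g).prod
        else 0 := by
  have hlist : (List.ofFn fun i : Fin n => pd i ^ (r - 1))
      = (List.finRange n).map fun i => (MvPolynomial.pderiv i).toLinearMap ^ (r - 1) :=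
    List.ofFn_eq_map
  rw [hlist, MvPolynomial.list_prod_pderiv_pow_apply_prod _ _ (fun i j hji =>
    (MvPolynomial.pderiv j).apply_prod_eq_zero _ _ fun k _ => pderiv_ZaddA_eq_zero A (Or.inl hji))
    (List.nodup_finRange n)]
  simp only [List.mem_finRange, if_true]
  split_ifs with hg
  · refine (Finset.prod_congr rfl fun i _ =>
      pd_pow_prod_ZaddA_of_pairwise_disjoint A hr hg i).trans ?_
    rw [survivingTerm, Finset.prod_mul_distrib]
    push_cast
    rw [Finset.prod_mul_distrib, Finset.prod_const, Finset.card_univ, Fintype.card_fin]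
  · obtain ⟨k, l, hkl, hdisj⟩ : ∃ k l, k ≠ l ∧ ¬ (g k).Disjoint (g l) := by
      simpa [Pairwise] using hg
    obtain ⟨x, hk, hl⟩ : ∃ x, g k x ≠ x ∧ g l x ≠ x := by
      simpa [Equiv.Perm.Disjoint, not_or] using hdisj
    exact Finset.prod_eq_zero (Finset.mem_univ x) (pd_pow_prod_ZaddA_eq_zero A hk hl hkl)

end ZaddA

/-- Multilinearization: `((r-1)!)^n det_r(Z+A) = ∂^{r-1}_{z₁} ⋯ ∂^{r-1}_{z_n} (det(Z+A))^r`
as an identity in `ℂ[z₁,…,z_n]`. -/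
theorem detr_multilinearization {n : ℕ} (r : ℕ) (hr : 1 ≤ r)
    (A : Matrix (Fin n) (Fin n) ℂ) :
    (((r-1).factorial : ℂ) ^ n) • detr r (ZaddA A)
      = ((List.ofFn (fun i : Fin n => (pd i) ^ (r-1))).prod) ((ZaddA A).det ^ r) := by
  classical
  let sgn (σ : Equiv.Perm (Fin n)) : MvPolynomial (Fin n) ℂ := (Equiv.Perm.sign σ : ℤ)
  calc (((r-1).factorial : ℂ) ^ n) • detr r (ZaddA A)
      = ∑ σ, r ^ σ.cycleType.card • (sgn σ * survivingTerm A r σ) := smul_detr_ZaddA A r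
    _ = ∑ g : Fin r → Equiv.Perm (Fin n) with Pairwise fun k l => (g k).Disjoint (g l),
          sgn (List.ofFn g).prod * survivingTerm A r (List.ofFn g).prod :=
        (Equiv.Perm.sum_pairwise_disjoint _).symm
    _ = ∑ g : Fin r → Equiv.Perm (Fin n), sgn (List.ofFn g).prod
          * (List.ofFn fun i : Fin n => pd i ^ (r - 1)).prod (∏ i, ∏ k, ZaddA A i (g k i)) := by
        rw [Finset.sum_filter]
        refine Finset.sum_congr rfl fun g _ => ?_
        rw [list_prod_pd_pow_prod_ZaddA A hr]
        split_ifs <;> simp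
    _ = ((List.ofFn (fun i : Fin n => (pd i) ^ (r-1))).prod) ((ZaddA A).det ^ r) := by
        simp only [sgn, Matrix.det_pow_eq_sum, map_sum, ← zsmul_eq_mul, map_zsmul]
end

section
/- Let A be an n×n complex matrix, r ≥ 1 an integer, and Z = diag(z₁,…,z_n) the diagonal matrix of indeterminates. Then det_r(Z + A) = Σ_{S ⊆ {1,…,n}} r^{|S|} · (∏_{i∈S} z_i) · det_r(A(S^c)), as an identity in ℂ[z₁,…,z_n], where S^c = {1,…,n} \ S. -/
/-! Expanding each diagonal entry `zᵢ + aᵢᵢ` of `Z + A`, the terms of `det_r` that pick `zᵢ`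
for exactly the indices in `S` come from permutations fixing `S` pointwise, i.e. from
permutations of `Sᶜ`. Extending such a permutation by the identity on `S` keeps its sign and adds
`|S|` fixed points, hence `|S|` cycles; this is the factor `r^{|S|}`. -/

open Polynomial Matrix

/-- The principal submatrix of `A` with rows and columns indexed by `T`. -/
def psub {n : ℕ} (A : Matrix (Fin n) (Fin n) ℂ) (T : Finset (Fin n)) :
    Matrix ↥T ↥T ℂ :=
  A.submatrix (fun x : ↥T => (x : Fin n)) (fun x : ↥T => (x : Fin n))

namespace Equiv.Perm

variable {ι : Type*} [Fintype ι] [DecidableEq ι]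

lemma cycleCount_ofSubtype {p : ι → Prop} [DecidablePred p] [Fintype (Subtype p)]
    (τ : Perm (Subtype p)) :
    cycleCount (ofSubtype τ) = cycleCount τ + Fintype.card {i // ¬p i} := by
  obtain rfl : ‹Fintype (Subtype p)› = Subtype.fintype p := Subsingleton.elim _ _
  have hsupp : τ.support.card ≤ Fintype.card (Subtype p) := τ.support.card_le_univ
  have hcard : Fintype.card {i // ¬p i} = Fintype.card ι - Fintype.card (Subtype p) :=
    Fintype.card_subtype_compl p
  have hle : Fintype.card (Subtype p) ≤ Fintype.card ι :=
    Fintype.card_le_of_embedding (Function.Embedding.subtype p)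
  rw [cycleCount, cycleCount, cycleType_ofSubtype, support_ofSubtype, Finset.card_map]
  omega

lemma sum_ofSubtype_eq_sum_filter {M : Type*} [AddCommMonoid M] (p : ι → Prop) [DecidablePred p]
    [Fintype (Subtype p)] (f : Perm ι → M) :
    ∑ τ : Perm (Subtype p), f (ofSubtype τ) = ∑ σ with ∀ i, ¬p i → σ i = i, f σ := by
  rw [Finset.sum_subtype _ (p := fun σ : Perm ι => ∀ i, ¬p i → σ i = i) (fun σ => by simp)]
  exact (Perm.subtypeEquivSubtypePerm p).sum_comp (fun σ => f σ)

end Equiv.Perm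

section

variable {ι R : Type*} [Fintype ι] [DecidableEq ι] [CommRing R]

lemma detr_map {S : Type*} [CommRing S] (f : R →+* S) (r : ℕ) (M : Matrix ι ι R) :
    detr r (M.map f) = f (detr r M) := by
  simp [detr, map_sum, map_prod]

lemma prod_diagonal_add_apply (d : ι → R) (M : Matrix ι ι R) (σ : Equiv.Perm ι) :
    ∏ i, (diagonal d + M) i (σ i) = ∑ S : Finset ι,
      if ∀ i ∈ S, σ i = i then (∏ i ∈ S, d i) * ∏ i ∈ Sᶜ, M i (σ i) else 0 := by
  simp only [Matrix.add_apply, diagonal_apply, Finset.prod_add, Finset.powerset_univ,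
    Finset.compl_eq_univ_sdiff]
  refine Finset.sum_congr rfl fun S _ => ?_
  simp only [Finset.prod_ite_zero, ite_mul, zero_mul, eq_comm]

lemma sum_perm_fixing_eq_detr_submatrix (r : ℕ) (M : Matrix ι ι R) (S : Finset ι) :
    ∑ σ with ∀ i ∈ S, σ i = i, (Equiv.Perm.sign σ : R) * (r : R) ^ cycleCount σ *
      ∏ i ∈ Sᶜ, M i (σ i)
      = (r : R) ^ S.card * detr r (M.submatrix ((↑) : (Sᶜ : Finset ι) → ι) (↑)) := by
  have hfix : ∀ σ : Equiv.Perm ι, (∀ i ∈ S, σ i = i) ↔ ∀ i, i ∉ Sᶜ → σ i = i := by simp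
  rw [Finset.filter_congr fun σ _ => hfix σ, ← Equiv.Perm.sum_ofSubtype_eq_sum_filter, detr,
    Finset.mul_sum]
  refine Finset.sum_congr rfl fun τ _ => ?_
  have hprod :
      ∏ i ∈ Sᶜ, M i (Equiv.Perm.ofSubtype τ i) = ∏ i : (Sᶜ : Finset ι), M i (τ i) := by
    rw [← Finset.prod_coe_sort]
    simp only [Equiv.Perm.ofSubtype_apply_coe]
  have hcard : Fintype.card {i // i ∉ Sᶜ} = S.card := by simp
  rw [Equiv.Perm.sign_ofSubtype, Equiv.Perm.cycleCount_ofSubtype, hcard, hprod]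
  simp only [submatrix_apply]
  ring

theorem detr_diagonal_add (r : ℕ) (d : ι → R) (M : Matrix ι ι R) :
    detr r (diagonal d + M) = ∑ S : Finset ι, (r : R) ^ S.card * (∏ i ∈ S, d i) *
      detr r (M.submatrix ((↑) : (Sᶜ : Finset ι) → ι) (↑)) := by
  rw [detr]
  simp only [prod_diagonal_add_apply, Finset.mul_sum, mul_ite, mul_zero]
  rw [Finset.sum_comm]
  refine Finset.sum_congr rfl fun S _ => ?_
  rw [← Finset.sum_filter]
  calc _ = (∏ i ∈ S, d i) * ∑ σ with ∀ i ∈ S, σ i = i,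
        (Equiv.Perm.sign σ : R) * (r : R) ^ cycleCount σ * ∏ i ∈ Sᶜ, M i (σ i) := by
        rw [Finset.mul_sum]
        exact Finset.sum_congr rfl fun _ _ => by ring
    _ = _ := by
        rw [sum_perm_fixing_eq_detr_submatrix]
        ring

end

lemma ZaddA_eq_diagonal_add_map {n : ℕ} (A : Matrix (Fin n) (Fin n) ℂ) :
    ZaddA A = diagonal MvPolynomial.X + A.map MvPolynomial.C := by
  ext i j
  simp [ZaddA, diagonal_apply]

theorem detr_expansion_general {n : ℕ} (r : ℕ) (A : Matrix (Fin n) (Fin n) ℂ) :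
    detr r (ZaddA A)
      = ∑ S : Finset (Fin n),
          (r : MvPolynomial (Fin n) ℂ) ^ S.card * (∏ i ∈ S, MvPolynomial.X i) *
            MvPolynomial.C (detr r (psub A Sᶜ)) := by
  rw [ZaddA_eq_diagonal_add_map, detr_diagonal_add]
  simp only [psub, submatrix_map, detr_map]

/-- `det_r(Z + A) = Σ_{S ⊆ [n]} r^{|S|} (Π_{i∈S} zᵢ) det_r(A(Sᶜ))`. -/
theorem detr_expansion {n : ℕ} (r : ℕ) (hr : 1 ≤ r) (A : Matrix (Fin n) (Fin n) ℂ) :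
    detr r (ZaddA A)
      = ∑ S : Finset (Fin n),
          (r : MvPolynomial (Fin n) ℂ) ^ S.card * (∏ i ∈ S, MvPolynomial.X i) *
            MvPolynomial.C (detr r (psub A Sᶜ)) :=
  detr_expansion_general r A
end

section
/- Let A be an n×n complex Hermitian matrix with 0 ⪯ A ⪯ I whose diagonal entries all satisfy A_{ii} ≤ δ for some 0 ≤ δ ≤ 1. Then for every real b > 1 and every i ∈ {1,…,n}: ((bI − A)^{-1})_{ii} ≤ δ/(b−1) + (1−δ)/b. -/
open Polynomial Matrix
open scoped ComplexOrder

/-!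
On `[0, 1]` the function `λ ↦ 1 / (b - λ)` lies below its chord `1 / b + λ / (b (b - 1))`, with
slack `λ (1 - λ) / (b (b - 1) (b - λ))`. In matrix form, with `R = (b I - A)⁻¹`,
`(b - 1) I + A - b (b - 1) R = R ((A - A²) (b I - A)) R`, and the middle factor equals
`(b - 1) (A - A²) + (I - A) A (I - A)`, where `A - A² = A (I - A) A + (I - A) A (I - A)`.
All of these are congruences of positive semidefinite matrices, so no spectral decomposition
is needed. The `(i, i)` entry then gives `b (b - 1) Rᵢᵢ ≤ b - 1 + Aᵢᵢ ≤ b - 1 + δ`.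
-/

namespace Matrix

variable {n 𝕜 : Type*} [DecidableEq n] [RCLike 𝕜]

theorem posDef_smul_one_sub {A : Matrix n n 𝕜} (hA1 : (1 - A).PosSemidef) {b : ℝ}
    (hb : 1 < b) : ((b : 𝕜) • 1 - A).PosDef := by
  have hb' : (0 : 𝕜) < (b : 𝕜) - 1 := by exact_mod_cast sub_pos.mpr hb
  have h : (b : 𝕜) • 1 - A = ((b : 𝕜) - 1) • 1 + (1 - A) := by
    rw [sub_smul, one_smul]; abel
  rw [h]
  exact (PosDef.one.smul hb').add_posSemidef hA1

variable [Fintype n]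

theorem chord_sub_resolvent_eq {R : Type*} [CommRing R] {A : Matrix n n R} {b : R}
    (hB : IsUnit (b • 1 - A)) :
    (b - 1) • 1 + A - (b * (b - 1)) • (b • 1 - A)⁻¹
      = (b • 1 - A)⁻¹ * ((A - A * A) * (b • 1 - A)) * (b • 1 - A)⁻¹ := by
  set B := b • 1 - A with hB_def
  have hdet : IsUnit B.det := (isUnit_iff_isUnit_det B).mp hB
  have hpoly : B * ((b - 1) • 1 + A) - (b * (b - 1)) • 1 = A - A * A := by
    simp only [hB_def, sub_mul, mul_add, mul_sub, smul_mul_assoc, mul_smul_comm, one_mul, mul_one,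
      sub_smul, one_smul]
    module
  calc (b - 1) • 1 + A - (b * (b - 1)) • B⁻¹
      = B⁻¹ * (B * ((b - 1) • 1 + A - (b * (b - 1)) • B⁻¹)) := by
        rw [← Matrix.mul_assoc, nonsing_inv_mul B hdet, Matrix.one_mul]
    _ = B⁻¹ * (A - A * A) := by
        rw [Matrix.mul_sub, mul_smul_comm, mul_nonsing_inv B hdet, hpoly]
    _ = B⁻¹ * ((A - A * A) * B) * B⁻¹ := by
        rw [Matrix.mul_assoc, Matrix.mul_assoc, mul_nonsing_inv B hdet, Matrix.mul_one]

theorem PosSemidef.sub_mul_self {A : Matrix n n 𝕜} (hA : A.PosSemidef)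
    (hA1 : (1 - A).PosSemidef) : (A - A * A).PosSemidef := by
  have h : A - A * A = Aᴴ * (1 - A) * A + (1 - A)ᴴ * A * (1 - A) := by
    rw [hA.isHermitian.eq, hA1.isHermitian.eq]
    noncomm_ring
  rw [h]
  exact (hA1.conjTranspose_mul_mul_same A).add (hA.conjTranspose_mul_mul_same (1 - A))

theorem posSemidef_chord_sub_resolvent {A : Matrix n n 𝕜} (hA : A.PosSemidef)
    (hA1 : (1 - A).PosSemidef) {b : ℝ} (hb : 1 < b) :
    (((b : 𝕜) - 1) • 1 + A - ((b : 𝕜) * ((b : 𝕜) - 1)) • ((b : 𝕜) • 1 - A)⁻¹).PosSemidef := by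
  have hB := posDef_smul_one_sub hA1 hb
  have hb' : (0 : 𝕜) ≤ (b : 𝕜) - 1 := by exact_mod_cast (sub_pos.mpr hb).le
  have hM : ((A - A * A) * ((b : 𝕜) • 1 - A)).PosSemidef := by
    have h : (A - A * A) * ((b : 𝕜) • 1 - A)
        = ((b : 𝕜) - 1) • (A - A * A) + (1 - A)ᴴ * A * (1 - A) := by
      rw [hA1.isHermitian.eq]
      simp only [mul_sub, sub_mul, mul_smul_comm, one_mul, mul_one, Matrix.mul_assoc,
        sub_smul, smul_sub, one_smul]
      module
    rw [h]
    exact ((hA.sub_mul_self hA1).smul hb').add (hA.conjTranspose_mul_mul_same (1 - A))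
  rw [chord_sub_resolvent_eq hB.isUnit]
  have hcongr := hM.conjTranspose_mul_mul_same ((b : 𝕜) • 1 - A)⁻¹
  rwa [hB.inv.isHermitian.eq] at hcongr

end Matrix

theorem resolvent_diagonal_bound_general {n : ℕ} (δ : ℝ)
    (A : Matrix (Fin n) (Fin n) ℂ)
    (hA : A.PosSemidef) (hA1 : ((1 : Matrix (Fin n) (Fin n) ℂ) - A).PosSemidef)
    (hdiag : ∀ i, (A i i).re ≤ δ)
    (b : ℝ) (hb : 1 < b) (i : Fin n) :
    ((((b : ℂ) • (1 : Matrix (Fin n) (Fin n) ℂ) - A)⁻¹) i i).re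
      ≤ δ / (b - 1) + (1 - δ) / b := by
  have hb1 : 0 < b - 1 := sub_pos.mpr hb
  have hchord := (posSemidef_chord_sub_resolvent hA hA1 hb).diag_nonneg (i := i)
  generalize ((b : ℂ) • (1 : Matrix (Fin n) (Fin n) ℂ) - A)⁻¹ = R at hchord ⊢
  have hRii : b * (b - 1) * (R i i).re ≤ b - 1 + (A i i).re := by
    simpa using (Complex.nonneg_iff.mp hchord).1
  calc (R i i).re ≤ (b - 1 + δ) / (b * (b - 1)) := by
        rw [le_div_iff₀ (by positivity)]
        linarith [hdiag i]
    _ = δ / (b - 1) + (1 - δ) / b := by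
        field_simp
        ring

/-- Barrier value estimate: for a positive contraction `A` with diagonal entries at most
`δ` and any real `b > 1`, the diagonal entries of `(bI - A)^{-1}` are at most
`δ/(b-1) + (1-δ)/b`. -/
theorem resolvent_diagonal_bound {n : ℕ} (δ : ℝ) (hδ0 : 0 ≤ δ) (hδ1 : δ ≤ 1)
    (A : Matrix (Fin n) (Fin n) ℂ)
    (hA : A.PosSemidef) (hA1 : ((1 : Matrix (Fin n) (Fin n) ℂ) - A).PosSemidef)
    (hdiag : ∀ i, (A i i).re ≤ δ)
    (b : ℝ) (hb : 1 < b) (i : Fin n) :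
    ((((b : ℂ) • (1 : Matrix (Fin n) (Fin n) ℂ) - A)⁻¹) i i).re
      ≤ δ / (b - 1) + (1 - δ) / b :=
  resolvent_diagonal_bound_general δ A hA hA1 hdiag b hb i
end
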